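/- arXiv:1911.01626 — 9 statements merged into one kernel-verified Lean document; each statement's English description precedes it below -/
import Mathlib

section
/- Fix an integer k ≥ 1, a real W > 0, and points x, y ∈ ℝ^k with 2·‖x − y‖₁ ≤ W, where ‖z‖₁ = Σ_{i=1}^{k} |z_i|. Let r₁, …, r_k be independent random variables, each uniform on [0, W). Then the probability that ⌊x_i + r_i⌋_W = ⌊y_i + r_i⌋_W holds simultaneously for all i ∈ {1,…,k} is at least e^{−1}. (Equivalently: under a randomly shifted grid of cell width W, two points at ℓ₁-distance at most W/2 land in the same grid cell with probability at least e^{−1}.) -/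
open MeasureTheory

/-- The uniform probability measure on the interval `[0, W)`. -/
noncomputable def unifIco (W : ℝ) : Measure ℝ :=
  (ENNReal.ofReal W)⁻¹ • volume.restrict (Set.Ico 0 W)

/-- `⌊z⌋_W`, the largest integer multiple of `W` not exceeding `z`. -/
noncomputable def floorW (W z : ℝ) : ℝ := W * ⌊z / W⌋


lemma floor_eq_floor_add_iff (a δ : ℝ) (h0 : 0 ≤ δ) (h1 : δ < 1) :
    ⌊a⌋ = ⌊a + δ⌋ ↔ Int.fract a + δ < 1 := by
  constructor
  · intro h
    have h2 : a + δ < ⌊a + δ⌋ + 1 := Int.lt_floor_add_one _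
    have : Int.fract a = a - ⌊a⌋ := Int.self_sub_floor a ▸ rfl
    rw [this]
    rw [← h] at h2
    linarith
  · intro h
    symm
    rw [Int.floor_eq_iff]
    have hf : (⌊a⌋ : ℝ) ≤ a := Int.floor_le a
    have : Int.fract a = a - ⌊a⌋ := Int.self_sub_floor a ▸ rfl
    rw [this] at h
    refine ⟨by linarith, by push_cast; linarith⟩

lemma fract_shift (z : ℝ) (h1 : 1 ≤ z) (h2 : z < 2) : Int.fract z = z - 1 := by
  rw [← Int.fract_sub_intCast z 1,
    Int.fract_eq_self.mpr (by constructor <;> push_cast <;> linarith)]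
  push_cast; ring

lemma vol_fract (W : ℝ) (hW : 0 < W) (a c : ℝ) (hc0 : 0 ≤ c) (hc1 : c ≤ 1) :
    volume {t | t ∈ Set.Ico (0:ℝ) W ∧ Int.fract (a + t / W) < c}
      = ENNReal.ofReal (c * W) := by
  set f := Int.fract a with hf
  have hf0 : 0 ≤ f := Int.fract_nonneg a
  have hf1 : f < 1 := Int.fract_lt_one a
  have hfr : ∀ t : ℝ, Int.fract (a + t / W) = Int.fract (f + t / W) := by
    intro t
    conv_lhs => rw [← Int.floor_add_fract a, add_assoc, Int.fract_intCast_add]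
  have hset : {t | t ∈ Set.Ico (0:ℝ) W ∧ Int.fract (a + t / W) < c}
      = Set.Ico 0 ((c - f) * W) ∪ Set.Ico ((1 - f) * W) ((min 1 (1 + c - f)) * W) := by
    ext t
    simp only [Set.mem_setOf_eq, Set.mem_Ico, Set.mem_union, hfr]
    constructor
    · rintro ⟨⟨ht0, htW⟩, hlt⟩
      have hs1 : t / W < 1 := (div_lt_one hW).mpr htW
      have hs0 : 0 ≤ t / W := div_nonneg ht0 hW.le
      rcases lt_or_ge (f + t / W) 1 with h | h
      · rw [Int.fract_eq_self.mpr ⟨by linarith, h⟩] at hlt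
        left
        refine ⟨ht0, ?_⟩
        rw [← div_lt_iff₀ hW] at *
        linarith
      · rw [fract_shift _ h (by linarith)] at hlt
        right
        constructor
        · rw [← le_div_iff₀ hW]; linarith
        · rw [← div_lt_iff₀ hW]
          exact lt_min (by linarith) (by linarith)
    · rintro (⟨ht0, htc⟩ | ⟨ht1, ht2⟩)
      · rw [← div_lt_iff₀ hW] at htc
        have hs0 : 0 ≤ t / W := div_nonneg ht0 hW.le
        have h1 : f + t / W < 1 := by linarith
        rw [Int.fract_eq_self.mpr ⟨by linarith, h1⟩]
        exact ⟨⟨ht0, by rw [← div_lt_one hW]; linarith⟩, by linarith⟩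
      · rw [← le_div_iff₀ hW] at ht1
        rw [← div_lt_iff₀ hW] at ht2
        have hm1 : t / W < 1 := lt_of_lt_of_le ht2 (min_le_left _ _)
        have hm2 : t / W < 1 + c - f := lt_of_lt_of_le ht2 (min_le_right _ _)
        have h1 : 1 ≤ f + t / W := by linarith
        refine ⟨⟨?_, (div_lt_one hW).mp hm1⟩,
          by rw [fract_shift _ h1 (by linarith)]; linarith⟩
        have : 0 ≤ (1 - f) * W := mul_nonneg (by linarith) hW.le
        linarith [(le_div_iff₀ hW).mp ht1, mul_pos hW hW]
  rw [hset, measure_union _ measurableSet_Ico, Real.volume_Ico, Real.volume_Ico]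
  · rcases le_or_gt c f with h | h
    · rw [min_eq_right (by linarith)]
      have h1 : (c - f) * W - 0 ≤ 0 := by nlinarith
      rw [ENNReal.ofReal_eq_zero.mpr h1, zero_add]
      congr 1
      ring
    · rw [min_eq_left (by linarith)]
      rw [← ENNReal.ofReal_add (by nlinarith) (by nlinarith)]
      congr 1
      ring
  · apply Set.disjoint_left.mpr
    rintro t ⟨-, h1⟩ ⟨h2, -⟩
    have : (c - f) * W ≤ (1 - f) * W := by nlinarith
    linarith

lemma coord_ord (W : ℝ) (hW : 0 < W) (x d : ℝ) (hd0 : 0 ≤ d) (hd : d < W) :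
    unifIco W {t | floorW W (x + t) = floorW W (x + d + t)}
      = ENNReal.ofReal (1 - d / W) := by
  have hne : (ENNReal.ofReal W) ≠ 0 := by simp [hW]
  have htop : (ENNReal.ofReal W) ≠ ⊤ := ENNReal.ofReal_ne_top
  have hdW : d / W < 1 := (div_lt_one hW).mpr hd
  have hc0 : 0 ≤ 1 - d / W := by linarith
  have key : {t | floorW W (x + t) = floorW W (x + d + t)} ∩ Set.Ico 0 W
      = {t | t ∈ Set.Ico (0:ℝ) W ∧ Int.fract (x / W + t / W) < 1 - d / W} := by
    ext t
    simp only [Set.mem_inter_iff, Set.mem_setOf_eq, floorW]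
    rw [and_comm]
    apply and_congr_right
    intro _
    have h1 : W * (⌊(x + t) / W⌋ : ℝ) = W * (⌊(x + d + t) / W⌋ : ℝ)
        ↔ ⌊(x + t) / W⌋ = ⌊(x + d + t) / W⌋ := by
      rw [mul_right_inj' hW.ne']
      exact_mod_cast Int.cast_injective.eq_iff
    rw [h1, show (x + d + t) / W = (x + t) / W + d / W by ring,
      floor_eq_floor_add_iff _ _ (div_nonneg hd0 hW.le) hdW,
      show (x + t) / W = x / W + t / W by ring]
    constructor <;> intro <;> linarith
  rw [show unifIco W {t | floorW W (x + t) = floorW W (x + d + t)}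
      = (ENNReal.ofReal W)⁻¹ *
        volume ({t | floorW W (x + t) = floorW W (x + d + t)} ∩ Set.Ico 0 W) by
    simp [unifIco, Measure.restrict_apply' measurableSet_Ico]]
  rw [key, vol_fract W hW (x / W) _ hc0 (by linarith [div_nonneg hd0 hW.le]),
    ENNReal.ofReal_mul hc0, mul_comm (ENNReal.ofReal (1 - d / W)) _, ← mul_assoc,
    ENNReal.inv_mul_cancel hne htop, one_mul]

lemma coord (W : ℝ) (hW : 0 < W) (x y : ℝ) (hd : |x - y| < W) :
    unifIco W {t | floorW W (x + t) = floorW W (y + t)}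
      = ENNReal.ofReal (1 - |x - y| / W) := by
  rcases le_total x y with h | h
  · have h1 : |x - y| = y - x := by rw [abs_sub_comm]; exact abs_of_nonneg (by linarith)
    rw [h1]
    have := coord_ord W hW x (y - x) (by linarith) (by rw [h1] at hd; linarith)
    simpa using this
  · have h1 : |x - y| = x - y := abs_of_nonneg (by linarith)
    rw [h1]
    have := coord_ord W hW y (x - y) (by linarith) (by rw [h1] at hd; linarith)
    have h2 : {t | floorW W (x + t) = floorW W (y + t)}
        = {t | floorW W (y + t) = floorW W (y + (x - y) + t)} := by
      ext t; simp [eq_comm, show y + (x - y) = x by ring]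
    rw [h2, this]

lemma unifIco_prob (W : ℝ) (hW : 0 < W) : IsProbabilityMeasure (unifIco W) := by
  constructor
  simp only [unifIco, Measure.smul_apply, smul_eq_mul,
    Measure.restrict_apply' measurableSet_Ico, Set.univ_inter, Real.volume_Ico, sub_zero]
  exact ENNReal.inv_mul_cancel (by simp [hW]) ENNReal.ofReal_ne_top

lemma exp_le_one_sub {t : ℝ} (ht0 : 0 ≤ t) (ht2 : t ≤ 1 / 2) :
    Real.exp (-2 * t) ≤ 1 - t := by
  have h := Real.add_one_le_exp (2 * t)
  have hp : (0:ℝ) < 1 + 2 * t := by linarith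
  have h1 : (Real.exp (2 * t))⁻¹ ≤ (1 + 2 * t)⁻¹ := by
    apply inv_anti₀ hp; linarith
  have h2 : (1 + 2 * t)⁻¹ ≤ 1 - t := by
    rw [inv_eq_one_div, div_le_iff₀ hp]; nlinarith
  calc Real.exp (-2 * t) = (Real.exp (2 * t))⁻¹ := by
        rw [show (-2 : ℝ) * t = -(2 * t) by ring, Real.exp_neg]
    _ ≤ 1 - t := le_trans h1 h2

/-- Under a randomly shifted grid of cell width `W` (independent uniform shifts in each
coordinate), two points of ℝ^k at ℓ₁-distance at most `W/2` land in the same grid cell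
with probability at least `e⁻¹`. -/
theorem grid_same_cell_prob
    (k : ℕ) (hk : 1 ≤ k) (W : ℝ) (hW : 0 < W)
    (x y : Fin k → ℝ) (hxy : 2 * ∑ i, |x i - y i| ≤ W) :
    ENNReal.ofReal (Real.exp (-1)) ≤
      Measure.pi (fun _ : Fin k => unifIco W)
        {r : Fin k → ℝ | ∀ i, floorW W (x i + r i) = floorW W (y i + r i)} := by
  haveI := unifIco_prob W hW
  have hd2 : ∀ i, |x i - y i| ≤ W / 2 := by
    intro i
    have := Finset.single_le_sum (f := fun i => |x i - y i|)
      (fun i _ => abs_nonneg _) (Finset.mem_univ i)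
    linarith
  have hset : {r : Fin k → ℝ | ∀ i, floorW W (x i + r i) = floorW W (y i + r i)}
      = Set.pi Set.univ (fun i => {t | floorW W (x i + t) = floorW W (y i + t)}) := by
    ext r; simp [Set.mem_pi]
  rw [hset, Measure.pi_pi]
  have hco : ∀ i, unifIco W {t | floorW W (x i + t) = floorW W (y i + t)}
      = ENNReal.ofReal (1 - |x i - y i| / W) := fun i =>
    coord W hW _ _ (lt_of_le_of_lt (hd2 i) (by linarith))
  rw [Finset.prod_congr rfl (fun i _ => hco i),
    ← ENNReal.ofReal_prod_of_nonneg (fun i _ => by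
      have := hd2 i
      have h1 : |x i - y i| / W ≤ 1 := by
        rw [div_le_one hW]; linarith
      linarith)]
  apply ENNReal.ofReal_le_ofReal
  have ht2 : ∀ i, |x i - y i| / W ≤ 1 / 2 := fun i => by
    rw [div_le_div_iff₀ hW (by norm_num)]; linarith [hd2 i]
  have ht0 : ∀ i, 0 ≤ |x i - y i| / W := fun i => div_nonneg (abs_nonneg _) hW.le
  calc Real.exp (-1) ≤ Real.exp (∑ i, -2 * (|x i - y i| / W)) := by
        apply Real.exp_le_exp.mpr
        have hsum : ∑ i, |x i - y i| / W ≤ 1 / 2 := by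
          rw [← Finset.sum_div, div_le_div_iff₀ hW (by norm_num)]
          linarith
        have : ∑ i, -2 * (|x i - y i| / W) = -2 * ∑ i, |x i - y i| / W := by
          rw [Finset.mul_sum]
        rw [this]; linarith
    _ = ∏ i, Real.exp (-2 * (|x i - y i| / W)) := by rw [Real.exp_sum]
    _ ≤ ∏ i, (1 - |x i - y i| / W) :=
        Finset.prod_le_prod (fun i _ => (Real.exp_pos _).le)
          (fun i _ => exp_le_one_sub (ht0 i) (ht2 i))
end

section
/- Fix a real W > 0 and reals x, y with δ := x − y ≥ 0. Let r be a random variable uniform on [0, W). Then the random variable ⌊x + r⌋_W − ⌊y + r⌋_W takes the value ⌊δ⌋_W + W with probability {δ}_W / W and the value ⌊δ⌋_W with probability 1 − {δ}_W / W. In particular, E[⌊x + r⌋_W − ⌊y + r⌋_W] = δ: randomly shifted grid rounding is unbiased for differences. -/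
open MeasureTheory

/-- `{z}_W := z - ⌊z⌋_W ∈ [0, W)`. -/
noncomputable def fracW (W z : ℝ) : ℝ := z - floorW W z

lemma floorSplit (u v : ℝ) :
    ⌊u + v⌋ = ⌊u⌋ + ⌊v⌋ + if 1 ≤ Int.fract u + Int.fract v then 1 else 0 := by
  have h : u + v = ((⌊u⌋ + ⌊v⌋ : ℤ) : ℝ) + (Int.fract u + Int.fract v) := by
    push_cast [Int.fract]; ring
  rw [h, Int.floor_intCast_add]
  have h0 : (0:ℝ) ≤ Int.fract u + Int.fract v :=
    add_nonneg (Int.fract_nonneg u) (Int.fract_nonneg v)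
  have h2 : Int.fract u + Int.fract v < 2 := by
    have := Int.fract_lt_one u; have := Int.fract_lt_one v; linarith
  congr 1
  split_ifs with h1
  · rw [Int.floor_eq_iff]; push_cast; constructor <;> linarith
  · rw [Int.floor_eq_zero_iff]; constructor <;> [exact h0; simpa using (lt_of_not_ge h1)]

lemma vol_cond (W : ℝ) (hW : 0 < W) (y θ' : ℝ) (hθ0 : 0 ≤ θ') (hθ1 : θ' < 1) :
    volume ({z : ℝ | 1 ≤ Int.fract ((y + z) / W) + θ'} ∩ Set.Ico 0 W)
      = ENNReal.ofReal (W * θ') := by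
  set c := Int.fract (y / W) with hc
  have hc0 : 0 ≤ c := Int.fract_nonneg _
  have hc1 : c < 1 := Int.fract_lt_one _
  set β := W * c with hβ
  have hβ0 : 0 ≤ β := mul_nonneg hW.le hc0
  have hβW : β < W := by nlinarith
  have hiff : ∀ a t : ℝ, (1 ≤ a / W + t) ↔ (W ≤ a + t * W) := by
    intro a t
    rw [← sub_le_iff_le_add, le_div_iff₀ hW]
    constructor <;> intro h <;> nlinarith
  have hfr : ∀ z ∈ Set.Ico (0:ℝ) W,
      Int.fract ((y + z) / W) = if β + z < W then (β + z) / W else (β + z) / W - 1 := by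
    intro z hz
    have hz0 : (0:ℝ) ≤ z := hz.1
    have hzW : z < W := hz.2
    have h1 : (y + z) / W = (⌊y / W⌋ : ℝ) + (c + z / W) := by
      rw [hc, Int.fract]; field_simp; ring
    rw [h1, Int.fract_intCast_add]
    have hcz : c + z / W = (β + z) / W := by field_simp; ring
    rw [hcz]
    split_ifs with h
    · exact Int.fract_eq_self.2 ⟨by positivity, by rwa [div_lt_one hW]⟩
    · push_neg at h
      have h4 : Int.fract ((β + z) / W) = Int.fract ((β + z) / W - 1) := by
        rw [show (β + z) / W - 1 = (β + z) / W + ((-1 : ℤ) : ℝ) by push_cast; ring,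
          Int.fract_add_intCast]
      rw [h4]
      refine Int.fract_eq_self.2 ⟨?_, ?_⟩
      · rw [sub_nonneg, le_div_iff₀ hW]; nlinarith
      · rw [sub_lt_iff_lt_add, div_lt_iff₀ hW]; linarith
  rcases le_or_gt (W * θ' + β) W with hcase | hcase
  · have hset : {z : ℝ | 1 ≤ Int.fract ((y + z) / W) + θ'} ∩ Set.Ico 0 W
        = Set.Ico (W - W * θ' - β) (W - β) := by
      ext z
      simp only [Set.mem_inter_iff, Set.mem_setOf_eq, Set.mem_Ico]
      constructor
      · rintro ⟨hcond, hz⟩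
        rw [hfr z hz] at hcond
        split_ifs at hcond with h
        · rw [hiff] at hcond
          constructor <;> nlinarith [hz.1, hz.2]
        · push_neg at h
          have hcond' := (hiff (β + z) (θ' - 1)).1 (by linarith)
          constructor <;> nlinarith [hz.1, hz.2]
      · rintro ⟨h1, h2⟩
        have hz : z ∈ Set.Ico (0:ℝ) W := ⟨by linarith, by linarith⟩
        refine ⟨?_, hz⟩
        rw [hfr z hz, if_pos (by linarith), hiff]
        nlinarith
    rw [hset, Real.volume_Ico]
    congr 1; ring
  · have hset : {z : ℝ | 1 ≤ Int.fract ((y + z) / W) + θ'} ∩ Set.Ico 0 W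
        = Set.Ico 0 (W - β) ∪ Set.Ico (2 * W - W * θ' - β) W := by
      ext z
      simp only [Set.mem_inter_iff, Set.mem_setOf_eq, Set.mem_Ico, Set.mem_union]
      constructor
      · rintro ⟨hcond, hz⟩
        rw [hfr z hz] at hcond
        split_ifs at hcond with h
        · exact Or.inl ⟨hz.1, by linarith⟩
        · push_neg at h
          have hcond' := (hiff (β + z) (θ' - 1)).1 (by linarith)
          exact Or.inr ⟨by nlinarith, hz.2⟩
      · rintro (⟨h1, h2⟩ | ⟨h1, h2⟩)
        · have hz : z ∈ Set.Ico (0:ℝ) W := ⟨h1, by linarith⟩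
          refine ⟨?_, hz⟩
          rw [hfr z hz, if_pos (by linarith), hiff]
          nlinarith
        · have hz : z ∈ Set.Ico (0:ℝ) W := ⟨by nlinarith, h2⟩
          refine ⟨?_, hz⟩
          rw [hfr z hz, if_neg (by push_neg; nlinarith)]
          have := (hiff (β + z) (θ' - 1)).2 (by nlinarith)
          linarith
    rw [hset, measure_union ?_ measurableSet_Ico]
    · rw [Real.volume_Ico, Real.volume_Ico,
        ← ENNReal.ofReal_add (by linarith) (by nlinarith)]
      congr 1; ring
    · rw [Set.disjoint_left]
      rintro z ⟨_, h2⟩ ⟨h3, _⟩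
      nlinarith

/-- For a uniform random shift `r` on `[0, W)` and `δ := x - y ≥ 0`, the difference of
the rounded values `⌊x + r⌋_W - ⌊y + r⌋_W` equals `⌊δ⌋_W + W` with probability
`{δ}_W / W` and equals `⌊δ⌋_W` with probability `1 - {δ}_W / W`; in particular its
expectation is exactly `δ`: randomly shifted grid rounding is unbiased for differences. -/
theorem grid_rounding_unbiased
    (W : ℝ) (hW : 0 < W) (x y : ℝ) (hxy : 0 ≤ x - y)
    {Ω : Type*} [MeasurableSpace Ω] (μ : Measure Ω) [IsProbabilityMeasure μ]
    (r : Ω → ℝ) (hr : Measurable r) (hlaw : μ.map r = unifIco W) :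
    μ {ω | floorW W (x + r ω) - floorW W (y + r ω) = floorW W (x - y) + W}
        = ENNReal.ofReal (fracW W (x - y) / W) ∧
    μ {ω | floorW W (x + r ω) - floorW W (y + r ω) = floorW W (x - y)}
        = ENNReal.ofReal (1 - fracW W (x - y) / W) ∧
    ∫ ω, (floorW W (x + r ω) - floorW W (y + r ω)) ∂μ = x - y := by
  have hWne : W ≠ 0 := hW.ne'
  set δ := x - y with hδ
  set n : ℤ := ⌊δ / W⌋ with hn
  set θ' := Int.fract (δ / W) with hθ'
  have hθ0 : 0 ≤ θ' := Int.fract_nonneg _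
  have hθ1 : θ' < 1 := Int.fract_lt_one _
  have hfloorδ : floorW W δ = W * n := by rw [floorW, ← hn]
  have hfracW : fracW W δ = W * θ' := by
    rw [fracW, hfloorδ, hθ', Int.fract, ← hn]; field_simp
  have hfdiv : fracW W δ / W = θ' := by rw [hfracW, mul_div_cancel_left₀ _ hWne]
  -- pointwise key identity
  have key : ∀ z : ℝ, floorW W (x + z) - floorW W (y + z)
      = W * n + (if 1 ≤ Int.fract ((y + z) / W) + θ' then W else 0) := by
    intro z
    have hxz : (x + z) / W = (y + z) / W + δ / W := by rw [hδ]; field_simp; ring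
    rw [floorW, floorW, hxz, floorSplit, ← hn, ← hθ']
    push_cast
    split_ifs <;> ring
  set C : Set ℝ := {z | 1 ≤ Int.fract ((y + z) / W) + θ'} with hC
  have hCm : MeasurableSet C :=
    measurableSet_le measurable_const
      (((measurable_const.add measurable_id).div_const W).fract.add measurable_const)
  have hAm : MeasurableSet (r ⁻¹' C) := hr hCm
  -- event identifications
  have hiffA : ∀ z, (floorW W (x + z) - floorW W (y + z) = floorW W δ + W) ↔ z ∈ C := by
    intro z
    rw [key z, hfloorδ]
    by_cases h : (1:ℝ) ≤ Int.fract ((y + z) / W) + θ'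
    · rw [if_pos h]; exact iff_of_true rfl h
    · rw [if_neg h]; exact iff_of_false (fun he => hWne (by linarith)) h
  have hiffB : ∀ z, (floorW W (x + z) - floorW W (y + z) = floorW W δ) ↔ z ∉ C := by
    intro z
    rw [key z, hfloorδ]
    by_cases h : (1:ℝ) ≤ Int.fract ((y + z) / W) + θ'
    · rw [if_pos h]; exact iff_of_false (fun he => hWne (by linarith)) (not_not_intro h)
    · rw [if_neg h]; exact iff_of_true (add_zero _) h
  have hA : {ω | floorW W (x + r ω) - floorW W (y + r ω) = floorW W δ + W} = r ⁻¹' C := by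
    ext ω; exact hiffA (r ω)
  have hB : {ω | floorW W (x + r ω) - floorW W (y + r ω) = floorW W δ} = (r ⁻¹' C)ᶜ := by
    ext ω; exact hiffB (r ω)
  -- measure of C under unifIco
  have hWone : (ENNReal.ofReal W)⁻¹ * ENNReal.ofReal W = 1 :=
    ENNReal.inv_mul_cancel (ENNReal.ofReal_pos.2 hW).ne' ENNReal.ofReal_ne_top
  have hCval : unifIco W C = ENNReal.ofReal θ' := by
    rw [unifIco, Measure.smul_apply, Measure.restrict_apply hCm, smul_eq_mul, hC,
      vol_cond W hW y θ' hθ0 hθ1, ENNReal.ofReal_mul hW.le, ← mul_assoc, hWone, one_mul]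
  have hμA : μ (r ⁻¹' C) = ENNReal.ofReal θ' := by
    rw [← Measure.map_apply hr hCm, hlaw, hCval]
  refine ⟨?_, ?_, ?_⟩
  · rw [hA, hμA, hfdiv]
  · have huniv : unifIco W Set.univ = 1 := by
      rw [unifIco, Measure.smul_apply, Measure.restrict_apply MeasurableSet.univ,
        Set.univ_inter, Real.volume_Ico, smul_eq_mul, sub_zero, hWone]
    have hcompl : μ ((r ⁻¹' C)ᶜ) = 1 - ENNReal.ofReal θ' := by
      rw [← Set.preimage_compl, ← Measure.map_apply hr hCm.compl, hlaw,
        measure_compl hCm (by rw [hCval]; exact ENNReal.ofReal_ne_top), huniv, hCval]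
    rw [hB, hcompl, hfdiv, ENNReal.ofReal_sub _ hθ0, ENNReal.ofReal_one]
  · have hfeq : (fun ω => floorW W (x + r ω) - floorW W (y + r ω))
        = fun ω => W * n + Set.indicator (r ⁻¹' C) (fun _ => W) ω := by
      funext ω
      rw [key (r ω)]
      by_cases h : ω ∈ r ⁻¹' C
      · rw [Set.indicator_of_mem h,
          if_pos (show (1:ℝ) ≤ Int.fract ((y + r ω) / W) + θ' from h)]
      · rw [Set.indicator_of_notMem h,
          if_neg (show ¬(1:ℝ) ≤ Int.fract ((y + r ω) / W) + θ' from h)]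
    rw [hfeq, integral_add (integrable_const _) ((integrable_const W).indicator hAm),
      integral_const, integral_indicator_const _ hAm, measureReal_def, measureReal_def, hμA, measure_univ,
      ENNReal.toReal_ofReal hθ0]
    have hδeq : δ - W * n = W * θ' := by
      rw [← hfracW, fracW, hfloorδ]
    simp only [smul_eq_mul, ENNReal.toReal_one, one_mul]
    linarith
end

section
/- Fix a real W > 0 and reals x, y with |x − y| ≤ W. Let r be a random variable uniform on [0, W). Then the probability that ⌊x + r⌋_W = ⌊y + r⌋_W equals 1 − |x − y| / W. -/
open MeasureTheory

lemma key_vol (W : ℝ) (hW : 0 < W) (x y : ℝ) (hyx : y ≤ x) (hxW : x - y ≤ W) :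
    volume ({z : ℝ | ⌊(x + z) / W⌋ = ⌊(y + z) / W⌋} ∩ Set.Ico 0 W)
      = ENNReal.ofReal (W - (x - y)) := by
  set d : ℝ := x - y with hd
  have hd0 : 0 ≤ d := sub_nonneg.2 hyx
  set n : ℤ := ⌊y / W⌋ with hn
  set f : ℝ := y - W * n with hfdef
  have hcomm : (n : ℝ) * W = W * n := mul_comm _ _
  have hf0 : 0 ≤ f := by
    have h := Int.sub_floor_div_mul_nonneg y hW
    rw [← hn] at h; linarith
  have hfW : f < W := by
    have h := Int.sub_floor_div_mul_lt y hW
    rw [← hn] at h; linarith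
  have hy : y = W * n + f := by rw [hfdef]; ring
  have hx : x = W * n + f + d := by rw [hd]; linarith
  -- floor computations
  have hfl1 : ∀ z : ℝ, 0 ≤ z → z < W - f → ⌊(y + z) / W⌋ = n := by
    intro z h0 h1
    refine Int.floor_eq_iff.2 ⟨?_, ?_⟩
    · rw [le_div_iff₀ hW]; nlinarith
    · rw [div_lt_iff₀ hW]; push_cast; nlinarith
  have hfl2 : ∀ z : ℝ, W - f ≤ z → z < W → ⌊(y + z) / W⌋ = n + 1 := by
    intro z h0 h1
    refine Int.floor_eq_iff.2 ⟨?_, ?_⟩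
    · rw [le_div_iff₀ hW]; push_cast; nlinarith
    · rw [div_lt_iff₀ hW]; push_cast; nlinarith
  have hset : {z : ℝ | ⌊(x + z) / W⌋ = ⌊(y + z) / W⌋} ∩ Set.Ico 0 W
      = Set.Ico 0 (W - f - d) ∪ Set.Ico (W - f) (min W (2 * W - f - d)) := by
    ext z
    simp only [Set.mem_inter_iff, Set.mem_setOf_eq, Set.mem_Ico, Set.mem_union, lt_min_iff]
    constructor
    · rintro ⟨heq, hz0, hzW⟩
      rcases lt_or_ge z (W - f) with h | h
      · left
        refine ⟨hz0, ?_⟩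
        rw [hfl1 z hz0 h] at heq
        have h2 := (Int.floor_eq_iff.1 heq).2
        rw [div_lt_iff₀ hW] at h2
        push_cast at h2
        nlinarith
      · right
        refine ⟨h, hzW, ?_⟩
        rw [hfl2 z h hzW] at heq
        have h2 := (Int.floor_eq_iff.1 heq).2
        rw [div_lt_iff₀ hW] at h2
        push_cast at h2
        nlinarith
    · rintro (⟨hz0, hz⟩ | ⟨hz, hzW, hz2⟩)
      · have hzW : z < W := by nlinarith
        have hzf : z < W - f := by nlinarith
        refine ⟨?_, hz0, hzW⟩
        rw [hfl1 z hz0 hzf]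
        refine Int.floor_eq_iff.2 ⟨?_, ?_⟩
        · rw [le_div_iff₀ hW]; nlinarith
        · rw [div_lt_iff₀ hW]; push_cast; nlinarith
      · have hz0 : 0 ≤ z := by nlinarith
        refine ⟨?_, hz0, hzW⟩
        rw [hfl2 z hz hzW]
        refine Int.floor_eq_iff.2 ⟨?_, ?_⟩
        · rw [le_div_iff₀ hW]; push_cast; nlinarith
        · rw [div_lt_iff₀ hW]; push_cast; nlinarith
  rw [hset]
  have hdisj : Disjoint (Set.Ico (0:ℝ) (W - f - d)) (Set.Ico (W - f) (min W (2 * W - f - d))) := by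
    rw [Set.disjoint_left]
    intro z hz1 hz2
    simp only [Set.mem_Ico] at hz1 hz2
    linarith [hz1.2, hz2.1]
  rw [measure_union hdisj measurableSet_Ico, Real.volume_Ico, Real.volume_Ico]
  have hmin : min W (2 * W - f - d) - (W - f) = min f (W - d) := by
    rcases le_total W (2 * W - f - d) with h | h
    · rw [min_eq_left h, min_eq_left (by linarith)]; ring
    · rw [min_eq_right h, min_eq_right (by linarith)]; ring
  rw [hmin]
  rcases le_total f (W - d) with h | h
  · rw [min_eq_left h, ← ENNReal.ofReal_add (by linarith) hf0]
    congr 1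
    ring
  · rw [min_eq_right h, ENNReal.ofReal_of_nonpos (by linarith), zero_add]

/-- For a uniform random shift `r` on `[0, W)` and reals `x, y` with `|x - y| ≤ W`,
the probability that `x` and `y` land in the same cell of the randomly shifted grid
of width `W` (i.e. `⌊x + r⌋_W = ⌊y + r⌋_W`) is exactly `1 - |x - y| / W`. -/
theorem grid_same_cell_prob_one_dim
    (W : ℝ) (hW : 0 < W) (x y : ℝ) (hxy : |x - y| ≤ W)
    {Ω : Type*} [MeasurableSpace Ω] (μ : Measure Ω) [IsProbabilityMeasure μ]
    (r : Ω → ℝ) (hr : Measurable r) (hlaw : μ.map r = unifIco W) :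
    μ {ω | floorW W (x + r ω) = floorW W (y + r ω)}
      = ENNReal.ofReal (1 - |x - y| / W) := by
  set S : Set ℝ := {z : ℝ | ⌊(x + z) / W⌋ = ⌊(y + z) / W⌋} with hS
  have hSm : MeasurableSet S := by
    apply measurableSet_eq_fun
    · exact ((measurable_id.const_add x).div_const W).floor
    · exact ((measurable_id.const_add y).div_const W).floor
  have hpre : {ω | floorW W (x + r ω) = floorW W (y + r ω)} = r ⁻¹' S := by
    ext ω
    simp only [Set.mem_setOf_eq, Set.mem_preimage, hS, floorW]
    constructor
    · intro h
      exact_mod_cast mul_left_cancel₀ hW.ne' h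
    · intro h
      rw [h]
  have hvol : volume (S ∩ Set.Ico 0 W) = ENNReal.ofReal (W - |x - y|) := by
    rcases le_total y x with h | h
    · rw [abs_of_nonneg (sub_nonneg.2 h)]
      exact key_vol W hW x y h (by rwa [abs_of_nonneg (sub_nonneg.2 h)] at hxy)
    · rw [abs_of_nonpos (sub_nonpos.2 h)]
      have hsym : S = {z : ℝ | ⌊(y + z) / W⌋ = ⌊(x + z) / W⌋} := by
        ext z; exact eq_comm
      rw [hsym]
      have := key_vol W hW y x h (by rwa [abs_of_nonpos (sub_nonpos.2 h), neg_sub] at hxy)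
      rw [this]; ring_nf
  rw [hpre, ← Measure.map_apply hr hSm, hlaw, unifIco, Measure.smul_apply,
    Measure.restrict_apply hSm, hvol, smul_eq_mul, mul_comm, ← div_eq_mul_inv,
    ← ENNReal.ofReal_div_of_pos hW, sub_div, div_self hW.ne']
end

section
/- Fix an integer k ≥ 1, a real W > 0, a point a ∈ ℝ^k, and side lengths s ∈ ℝ^k with 0 ≤ s_i ≤ W for every i. Let r₁, …, r_k be independent random variables, each uniform on [0, W), and define h : ℝ^k → ℝ^k by h(x)_i := ⌊x_i + r_i⌋_W. Let B := ∏_{i=1}^{k} [a_i, a_i + s_i]. Then the image {h(x) : x ∈ B} is a finite set, and its expected cardinality is at most ∏_{i=1}^{k} (1 + s_i / W). -/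
open MeasureTheory
open scoped ENNReal NNReal

lemma lintegral_pi_prod {n : ℕ} (μ : Measure ℝ) [SigmaFinite μ]
    (f : Fin n → ℝ → ℝ≥0∞) (hf : ∀ i, Measurable (f i)) :
    ∫⁻ x : Fin n → ℝ, ∏ i, f i (x i) ∂(Measure.pi fun _ => μ)
      = ∏ i, ∫⁻ y, f i y ∂μ := by
  induction n with
  | zero =>
      simp [lintegral_const, Measure.pi_univ]
  | succ n ih =>
      have hmp := measurePreserving_piFinSuccAbove (fun _ : Fin (n + 1) => μ) 0
      have hG : Measurable (fun y : ℝ × (Fin n → ℝ) =>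
          f 0 y.1 * ∏ j, f j.succ (y.2 j)) := by
        refine ((hf 0).comp measurable_fst).mul ?_
        exact Finset.measurable_prod _ fun j _ =>
          (hf j.succ).comp ((measurable_pi_apply j).comp measurable_snd)
      calc ∫⁻ x : Fin (n + 1) → ℝ, ∏ i, f i (x i) ∂(Measure.pi fun _ => μ)
          = ∫⁻ x : Fin (n + 1) → ℝ,
              (fun y : ℝ × (Fin n → ℝ) => f 0 y.1 * ∏ j, f j.succ (y.2 j))
                (MeasurableEquiv.piFinSuccAbove (fun _ => ℝ) 0 x)
              ∂(Measure.pi fun _ => μ) := by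
            refine lintegral_congr fun x => ?_
            rw [Fin.prod_univ_succ]
            rfl
        _ = ∫⁻ y : ℝ × (Fin n → ℝ), f 0 y.1 * ∏ j, f j.succ (y.2 j)
              ∂(μ.prod (Measure.pi fun _ : Fin n => μ)) := hmp.lintegral_comp hG
        _ = (∫⁻ y, f 0 y ∂μ) * ∫⁻ x : Fin n → ℝ, ∏ j, f j.succ (x j)
              ∂(Measure.pi fun _ => μ) := by
            exact lintegral_prod_mul (hf 0).aemeasurable
              (Finset.measurable_prod Finset.univ fun (j : Fin n) _ =>
                (hf j.succ).comp (measurable_pi_apply j)).aemeasurable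
        _ = ∏ i, ∫⁻ y, f i y ∂μ := by
            rw [ih (fun j => f j.succ) (fun j => hf j.succ), Fin.prod_univ_succ]

lemma unifIco_univ {W : ℝ} (hW : 0 < W) : unifIco W Set.univ = 1 := by
  have : (volume.restrict (Set.Ico (0:ℝ) W)) Set.univ = ENNReal.ofReal W := by
    simp [Real.volume_Ico]
  simp only [unifIco, Measure.smul_apply, smul_eq_mul, this]
  exact ENNReal.inv_mul_cancel (by simp [hW]) ENNReal.ofReal_ne_top

lemma coord_image_subset (W a s r : ℝ) (hW : 0 < W) (hsW : s ≤ W) :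
    (fun z => floorW W (z + r)) '' Set.Icc a (a + s)
      ⊆ {floorW W (a + r), floorW W (a + r) + W} := by
  rintro _ ⟨z, ⟨hz1, hz2⟩, rfl⟩
  have hlow : ⌊(a + r) / W⌋ ≤ ⌊(z + r) / W⌋ :=
    Int.floor_le_floor (div_le_div_of_nonneg_right (by linarith) hW.le)
  have hhigh : ⌊(z + r) / W⌋ ≤ ⌊(a + r) / W⌋ + 1 := by
    have h1 : ⌊(z + r) / W⌋ ≤ ⌊(a + r + W) / W⌋ :=
      Int.floor_le_floor (div_le_div_of_nonneg_right (by linarith) hW.le)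
    have h2 : (a + r + W) / W = (a + r) / W + 1 := by field_simp
    rw [h2, Int.floor_add_one] at h1
    exact h1
  have hcase : ⌊(z + r) / W⌋ = ⌊(a + r) / W⌋ ∨ ⌊(z + r) / W⌋ = ⌊(a + r) / W⌋ + 1 := by
    omega
  simp only [Set.mem_insert_iff, Set.mem_singleton_iff, floorW]
  rcases hcase with h | h
  · left; rw [h]
  · right; rw [h]; push_cast; ring

lemma coord_image_subset_singleton (W a s r : ℝ) (hW : 0 < W) (hs0 : 0 ≤ s)
    (heq : ⌊(a + s + r) / W⌋ = ⌊(a + r) / W⌋) :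
    (fun z => floorW W (z + r)) '' Set.Icc a (a + s) ⊆ {floorW W (a + r)} := by
  rintro _ ⟨z, ⟨hz1, hz2⟩, rfl⟩
  have hlow : ⌊(a + r) / W⌋ ≤ ⌊(z + r) / W⌋ :=
    Int.floor_le_floor (div_le_div_of_nonneg_right (by linarith) hW.le)
  have hhigh : ⌊(z + r) / W⌋ ≤ ⌊(a + r) / W⌋ := by
    rw [← heq]; exact Int.floor_le_floor (div_le_div_of_nonneg_right (by linarith) hW.le)
  have h : ⌊(z + r) / W⌋ = ⌊(a + r) / W⌋ := le_antisymm hhigh hlow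
  simp [floorW, h]

lemma coord_integral (W a s : ℝ) (hW : 0 < W) (hs0 : 0 ≤ s) (hsW : s ≤ W) :
    ∫⁻ r, (if ⌊(a + s + r) / W⌋ = ⌊(a + r) / W⌋ then (1 : ℝ≥0∞) else 2) ∂(unifIco W)
      ≤ ENNReal.ofReal (1 + s / W) := by
  set E : Set ℝ := {r | ¬ (⌊(a + s + r) / W⌋ = ⌊(a + r) / W⌋)} with hE
  have hmeas1 : Measurable fun r : ℝ => ⌊(a + s + r) / W⌋ :=
    ((measurable_id.const_add (a + s)).div_const W).floor
  have hmeas2 : Measurable fun r : ℝ => ⌊(a + r) / W⌋ :=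
    ((measurable_id.const_add a).div_const W).floor
  have hEmeas : MeasurableSet E :=
    (measurableSet_eq_fun hmeas1 hmeas2).compl
  have hfun : (fun r => (if ⌊(a + s + r) / W⌋ = ⌊(a + r) / W⌋ then (1 : ℝ≥0∞) else 2))
      = fun r => 1 + E.indicator (fun _ => 1) r := by
    funext r
    by_cases h : ⌊(a + s + r) / W⌋ = ⌊(a + r) / W⌋
    · simp [h, hE, Set.indicator_of_notMem, Set.mem_setOf_eq]
    · rw [if_neg h, Set.indicator_of_mem (by exact h) (fun _ => (1:ℝ≥0∞))]
      norm_num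
  rw [hfun, lintegral_add_left measurable_const, lintegral_const,
    lintegral_indicator_const hEmeas 1, unifIco_univ hW, mul_one, one_mul]
  -- now bound `unifIco W E`
  have hvol : volume (E ∩ Set.Ico 0 W) ≤ ENNReal.ofReal s := by
    set m1 : ℤ := ⌊a / W⌋ + 1 with hm1
    set t : ℝ := m1 * W - a with ht
    have ht0 : 0 < t := by
      have : a / W < m1 := by
        rw [hm1]; push_cast; exact Int.lt_floor_add_one _
      have := (div_lt_iff₀ hW).mp this
      simp only [ht]; linarith
    have hsubset : E ∩ Set.Ico 0 W ⊆
        Set.Ico (max 0 (t - s)) t ∪ Set.Ico (t + W - s) W := by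
      rintro r ⟨hrE, hr0, hrW⟩
      have hne : ⌊(a + s + r) / W⌋ ≠ ⌊(a + r) / W⌋ := hrE
      have hmono : ⌊(a + r) / W⌋ ≤ ⌊(a + s + r) / W⌋ := by
        exact Int.floor_le_floor (div_le_div_of_nonneg_right (by linarith) hW.le)
      set m : ℤ := ⌊(a + r) / W⌋ + 1 with hm
      have hm_le_floor : m ≤ ⌊(a + s + r) / W⌋ := by omega
      have h1 : (m : ℝ) * W ≤ a + s + r := by
        have h2 : (m : ℝ) ≤ (a + s + r) / W :=
          le_trans (by exact_mod_cast hm_le_floor) (Int.floor_le _)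
        exact (le_div_iff₀ hW).mp h2
      have h2 : a + r < m * W := by
        have : (a + r) / W < m := by
          rw [hm]; push_cast; exact Int.lt_floor_add_one _
        linarith [(div_lt_iff₀ hW).mp this]
      have hm_ge : m1 ≤ m := by
        have haW : a / W < (m : ℝ) := by
          rw [div_lt_iff₀ hW]; linarith
        have : ⌊a / W⌋ < m := by
          have := lt_of_le_of_lt (Int.floor_le (a / W)) haW
          exact_mod_cast this
        omega
      have hm_le : m ≤ m1 + 1 := by
        have h4 : ((m : ℝ) - 2) * W < a := by nlinarith
        have h3 : ((m - 2 : ℤ) : ℝ) ≤ a / W := by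
          push_cast
          exact le_of_lt ((lt_div_iff₀ hW).mpr h4)
        have := Int.le_floor.mpr h3
        omega
      have hcase : m = m1 ∨ m = m1 + 1 := by omega
      rcases hcase with hmeq | hmeq
      · rw [hmeq] at h1 h2
        exact Or.inl ⟨max_le hr0 (by rw [ht]; linarith), by rw [ht]; linarith⟩
      · rw [hmeq] at h1
        push_cast at h1
        exact Or.inr ⟨by rw [ht]; linarith, hrW⟩
    calc volume (E ∩ Set.Ico 0 W)
        ≤ volume (Set.Ico (max 0 (t - s)) t) + volume (Set.Ico (t + W - s) W) :=
          le_trans (measure_mono hsubset) (measure_union_le _ _)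
      _ = ENNReal.ofReal (t - max 0 (t - s)) + ENNReal.ofReal (W - (t + W - s)) := by
          rw [Real.volume_Ico, Real.volume_Ico]
      _ ≤ ENNReal.ofReal s := by
          rcases le_or_gt s t with hst | hst
          · have h1 : t - max 0 (t - s) = s := by
              rw [max_eq_right (by linarith)]; ring
            have h2 : W - (t + W - s) ≤ 0 := by linarith
            rw [h1, ENNReal.ofReal_eq_zero.mpr h2, add_zero]
          · have h1 : t - max 0 (t - s) = t := by
              rw [max_eq_left (by linarith)]; ring
            have h2 : W - (t + W - s) = s - t := by ring
            rw [h1, h2, ← ENNReal.ofReal_add ht0.le (by linarith)]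
            simp
  have hEle : unifIco W E ≤ ENNReal.ofReal (s / W) := by
    have : unifIco W E = (ENNReal.ofReal W)⁻¹ * volume (E ∩ Set.Ico 0 W) := by
      simp [unifIco, Measure.restrict_apply hEmeas]
    rw [this, ENNReal.ofReal_div_of_pos hW, div_eq_mul_inv, mul_comm]
    exact mul_le_mul_left hvol _
  calc 1 + unifIco W E ≤ 1 + ENNReal.ofReal (s / W) := add_le_add_right hEle 1
    _ = ENNReal.ofReal (1 + s / W) := by
        rw [ENNReal.ofReal_add zero_le_one (by positivity), ENNReal.ofReal_one]

/-- Randomly shifted grid rounding `h(x)_i := ⌊x_i + r_i⌋_W` maps a box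
`B = ∏ [aᵢ, aᵢ + sᵢ]` with side lengths `0 ≤ sᵢ ≤ W` to a finite set, whose expected
cardinality is at most `∏ (1 + sᵢ / W)`. -/
theorem grid_image_expected_card
    (k : ℕ) (hk : 1 ≤ k) (W : ℝ) (hW : 0 < W)
    (a s : Fin k → ℝ) (hs0 : ∀ i, 0 ≤ s i) (hsW : ∀ i, s i ≤ W) :
    (∀ r : Fin k → ℝ,
      ((fun x : Fin k → ℝ => fun i => floorW W (x i + r i)) ''
        (Set.univ.pi fun i => Set.Icc (a i) (a i + s i))).Finite) ∧
    ∫⁻ r, (((fun x : Fin k → ℝ => fun i => floorW W (x i + r i)) ''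
          (Set.univ.pi fun i => Set.Icc (a i) (a i + s i))).ncard : ℝ≥0∞)
        ∂(Measure.pi fun _ : Fin k => unifIco W)
      ≤ ENNReal.ofReal (∏ i, (1 + s i / W)) := by
  set B := Set.univ.pi fun i => Set.Icc (a i) (a i + s i) with hB
  have hsub : ∀ r : Fin k → ℝ,
      ((fun x : Fin k → ℝ => fun i => floorW W (x i + r i)) '' B)
        ⊆ Set.univ.pi fun i =>
            (fun z => floorW W (z + r i)) '' Set.Icc (a i) (a i + s i) := by
    rintro r _ ⟨x, hx, rfl⟩ i _
    exact ⟨x i, hx i trivial, rfl⟩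
  have hSfin : ∀ (i : Fin k) (r : ℝ),
      ((fun z => floorW W (z + r)) '' Set.Icc (a i) (a i + s i)).Finite :=
    fun i r => ((Set.finite_singleton _).insert _).subset
      (coord_image_subset W (a i) (s i) r hW (hsW i))
  have hPfin : ∀ r : Fin k → ℝ,
      (Set.univ.pi fun i =>
        (fun z => floorW W (z + r i)) '' Set.Icc (a i) (a i + s i)).Finite :=
    fun r => Set.Finite.pi fun i => hSfin i (r i)
  have hfin : ∀ r : Fin k → ℝ,
      ((fun x : Fin k → ℝ => fun i => floorW W (x i + r i)) '' B).Finite :=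
    fun r => (hPfin r).subset (hsub r)
  refine ⟨hfin, ?_⟩
  haveI : IsProbabilityMeasure (unifIco W) := ⟨unifIco_univ hW⟩
  set g : Fin k → ℝ → ℝ≥0∞ := fun i r =>
    if ⌊(a i + s i + r) / W⌋ = ⌊(a i + r) / W⌋ then 1 else 2 with hg
  have hgmeas : ∀ i, Measurable (g i) := by
    intro i
    apply Measurable.ite _ measurable_const measurable_const
    exact measurableSet_eq_fun
      (((measurable_id.const_add (a i + s i)).div_const W).floor)
      (((measurable_id.const_add (a i)).div_const W).floor)
  have hpt : ∀ r : Fin k → ℝ,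
      (((fun x : Fin k → ℝ => fun i => floorW W (x i + r i)) '' B).ncard : ℝ≥0∞)
        ≤ ∏ i, g i (r i) := by
    intro r
    set S : Fin k → Set ℝ := fun i =>
      (fun z => floorW W (z + r i)) '' Set.Icc (a i) (a i + s i) with hS
    have h1 : ((fun x : Fin k → ℝ => fun i => floorW W (x i + r i)) '' B).ncard
        ≤ (Set.univ.pi S).ncard :=
      Set.ncard_le_ncard (hsub r) (hPfin r)
    have h2 : (Set.univ.pi S).ncard = ∏ i, (S i).ncard := by
      rw [← Nat.card_coe_set_eq, Nat.card_congr (Equiv.Set.univPi S), Nat.card_pi]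
      simp [Nat.card_coe_set_eq]
    have h3 : ∀ i, ((S i).ncard : ℝ≥0∞) ≤ g i (r i) := by
      intro i
      by_cases hc : ⌊(a i + s i + r i) / W⌋ = ⌊(a i + r i) / W⌋
      · have hle : (S i).ncard ≤ 1 := by
          have := Set.ncard_le_ncard
            (coord_image_subset_singleton W (a i) (s i) (r i) hW (hs0 i) hc)
            (Set.finite_singleton _)
          simpa using this
        simp only [hg, hc, if_true]
        exact_mod_cast hle
      · have hle : (S i).ncard ≤ 2 := by
          have h4 := Set.ncard_le_ncard
            (coord_image_subset W (a i) (s i) (r i) hW (hsW i))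
            ((Set.finite_singleton _).insert _)
          calc (S i).ncard ≤ ({floorW W (a i + r i), floorW W (a i + r i) + W} : Set ℝ).ncard := h4
            _ ≤ 2 := by
                refine le_trans (Set.ncard_insert_le _ _) ?_
                simp
        simp only [hg, hc, if_false]
        exact_mod_cast hle
    calc (((fun x : Fin k → ℝ => fun i => floorW W (x i + r i)) '' B).ncard : ℝ≥0∞)
        ≤ ((Set.univ.pi S).ncard : ℝ≥0∞) := by exact_mod_cast h1
      _ = ∏ i, ((S i).ncard : ℝ≥0∞) := by rw [h2]; push_cast; rfl
      _ ≤ ∏ i, g i (r i) := Finset.prod_le_prod' fun i _ => h3 i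
  calc ∫⁻ r, (((fun x : Fin k → ℝ => fun i => floorW W (x i + r i)) '' B).ncard : ℝ≥0∞)
        ∂(Measure.pi fun _ : Fin k => unifIco W)
      ≤ ∫⁻ r, ∏ i, g i (r i) ∂(Measure.pi fun _ : Fin k => unifIco W) :=
        lintegral_mono hpt
    _ = ∏ i, ∫⁻ y, g i y ∂(unifIco W) := lintegral_pi_prod _ g hgmeas
    _ ≤ ∏ i, ENNReal.ofReal (1 + s i / W) :=
        Finset.prod_le_prod' fun i _ =>
          coord_integral W (a i) (s i) hW (hs0 i) (hsW i)
    _ = ENNReal.ofReal (∏ i, (1 + s i / W)) := by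
        rw [← ENNReal.ofReal_prod_of_nonneg]
        intro i _
        have := hs0 i
        positivity
end

section
/- Let X be a finite metric space with |X| = n ≥ 1, let u, v ∈ X with d := dist(u, v) > 0, and let ε ∈ (0, 1/2]. Suppose C ≥ 1 satisfies C^L ≥ n where L := ⌊log 2 / log(1 + 2ε)⌋ (note L ≥ 1). Then there exists a real r ∈ [d/6, d/3] such that |B̄(u, (1+2ε)r)| ≤ C·|B̄(v, r)| or |B̄(v, (1+2ε)r)| ≤ C·|B̄(u, r)|, where B̄(x, ρ) := {y ∈ X : dist(x, y) ≤ ρ} denotes the closed ball and |·| denotes cardinality. -/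
open Metric

/-- Ball-growth pigeonhole: in a finite metric space on `n` points, for any two points
`u, v` at positive distance `d`, any `ε ∈ (0, 1/2]` and any `C ≥ 1` with
`C ^ ⌊log 2 / log (1 + 2ε)⌋ ≥ n`, there is a radius `r ∈ [d/6, d/3]` such that growing
one of the two balls of radius `r` around `u` or `v` by the factor `(1 + 2ε)` increases
its cardinality by a factor at most `C`. -/
theorem exists_ball_growth_radius
    {X : Type*} [MetricSpace X] [Fintype X]
    (n : ℕ) (hn : n = Fintype.card X) (hn1 : 1 ≤ n)
    (u v : X) (d : ℝ) (hd : d = dist u v) (hdpos : 0 < d)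
    (ε : ℝ) (hε0 : 0 < ε) (hε : ε ≤ 1 / 2)
    (C : ℝ) (hC : 1 ≤ C)
    (L : ℕ) (hL : L = ⌊Real.log 2 / Real.log (1 + 2 * ε)⌋₊)
    (hCL : (n : ℝ) ≤ C ^ L) :
    ∃ r : ℝ, d / 6 ≤ r ∧ r ≤ d / 3 ∧
      (((closedBall u ((1 + 2 * ε) * r)).ncard : ℝ) ≤ C * (closedBall v r).ncard ∨
       ((closedBall v ((1 + 2 * ε) * r)).ncard : ℝ) ≤ C * (closedBall u r).ncard) := by
  by_contra hcon
  push_neg at hcon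
  have hb1 : (1 : ℝ) < 1 + 2 * ε := by linarith
  have hb0 : (0 : ℝ) < 1 + 2 * ε := by linarith
  have hb2 : (1 : ℝ) + 2 * ε ≤ 2 := by linarith
  have hlogb : 0 < Real.log (1 + 2 * ε) := Real.log_pos hb1
  have hC0 : (0 : ℝ) < C := by linarith
  -- L ≥ 1
  have hL1 : 1 ≤ L := by
    rw [hL]
    apply Nat.le_floor
    rw [Nat.cast_one, le_div_iff₀ hlogb, one_mul]
    exact Real.log_le_log hb0 hb2
  -- (1+2ε)^k ≤ 2 for k ≤ L
  have hpow : ∀ k : ℕ, k ≤ L → (1 + 2 * ε) ^ k ≤ 2 := by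
    intro k hk
    have h1 : (k : ℝ) ≤ Real.log 2 / Real.log (1 + 2 * ε) := by
      calc (k : ℝ) ≤ (L : ℝ) := Nat.cast_le.2 hk
        _ ≤ _ := by
          rw [hL]
          exact Nat.floor_le (div_nonneg (Real.log_nonneg (by norm_num)) hlogb.le)
    have h2 : Real.log ((1 + 2 * ε) ^ k) ≤ Real.log 2 := by
      rw [Real.log_pow]
      exact (le_div_iff₀ hlogb).mp h1
    exact (Real.log_le_log_iff (pow_pos hb0 k) (by norm_num)).mp h2
  -- radii
  set r : ℕ → ℝ := fun k => (1 + 2 * ε) ^ k * (d / 6) with hr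
  have hrlow : ∀ k : ℕ, d / 6 ≤ r k := by
    intro k
    have h : (1 : ℝ) ≤ (1 + 2 * ε) ^ k := one_le_pow₀ hb1.le
    simp only [hr]
    nlinarith
  have hrpos : ∀ k : ℕ, 0 < r k := fun k => lt_of_lt_of_le (by linarith) (hrlow k)
  have hrhigh : ∀ k : ℕ, k ≤ L → r k ≤ d / 3 := by
    intro k hk
    have := hpow k hk
    have : (1 + 2 * ε) ^ k * (d / 6) ≤ 2 * (d / 6) := by
      apply mul_le_mul_of_nonneg_right this (by linarith)
    simpa [hr] using this.trans (by linarith)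
  -- cardinalities
  set f : ℕ → ℕ := fun k =>
    min (closedBall u (r k)).ncard (closedBall v (r k)).ncard with hf
  have hfle : ∀ k : ℕ, f k ≤ n := by
    intro k
    calc f k ≤ (closedBall u (r k)).ncard := min_le_left _ _
      _ ≤ (Set.univ : Set X).ncard :=
        Set.ncard_le_ncard (Set.subset_univ _) (Set.toFinite _)
      _ = n := by rw [Set.ncard_univ, Nat.card_eq_fintype_card, hn]
  have hf1 : 1 ≤ f 0 := by
    rw [hf]
    simp only [le_min_iff]
    constructor <;>
    · rw [Nat.one_le_iff_ne_zero, Ne, Set.ncard_eq_zero (Set.toFinite _)]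
      exact Set.Nonempty.ne_empty ⟨_, mem_closedBall_self (hrpos 0).le⟩
  -- growth step
  have hstep : ∀ k : ℕ, k < L → C * (f k : ℝ) < (f (k + 1) : ℝ) := by
    intro k hk
    obtain ⟨h1, h2⟩ := hcon (r k) (hrlow k) (hrhigh k hk.le)
    have hrs : (1 + 2 * ε) * r k = r (k + 1) := by
      simp only [hr]; ring
    rw [hrs] at h1 h2
    have hfu : (f k : ℝ) ≤ (closedBall u (r k)).ncard :=
      Nat.cast_le.2 (min_le_left _ _)
    have hfv : (f k : ℝ) ≤ (closedBall v (r k)).ncard :=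
      Nat.cast_le.2 (min_le_right _ _)
    have hle : (f (k + 1) : ℝ) =
        min ((closedBall u (r (k + 1))).ncard : ℝ) ((closedBall v (r (k + 1))).ncard : ℝ) := by
      simp [hf, Nat.cast_min]
    rw [hle, lt_min_iff]
    constructor
    · calc C * (f k : ℝ) ≤ C * (closedBall v (r k)).ncard :=
          mul_le_mul_of_nonneg_left hfv hC0.le
        _ < _ := h1
    · calc C * (f k : ℝ) ≤ C * (closedBall u (r k)).ncard :=
          mul_le_mul_of_nonneg_left hfu hC0.le
        _ < _ := h2
  -- induction: C^k ≤ f k for k ≤ L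
  have hind : ∀ k : ℕ, k ≤ L → C ^ k ≤ (f k : ℝ) := by
    intro k
    induction k with
    | zero => intro _; simpa using (Nat.one_le_cast.2 hf1 : (1 : ℝ) ≤ f 0)
    | succ m ih =>
      intro hm
      have h1 := ih (Nat.le_of_succ_le hm)
      have h2 := hstep m (Nat.lt_of_succ_le hm)
      have : C ^ (m + 1) < (f (m + 1) : ℝ) := by
        calc C ^ (m + 1) = C * C ^ m := by ring
          _ ≤ C * (f m : ℝ) := mul_le_mul_of_nonneg_left h1 hC0.le
          _ < (f (m + 1) : ℝ) := h2
      exact this.le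
  -- contradiction
  obtain ⟨m, hm⟩ : ∃ m, L = m + 1 := ⟨L - 1, (Nat.succ_pred_eq_of_pos hL1).symm⟩
  have h1 : C ^ m ≤ (f m : ℝ) := hind m (by omega)
  have h2 : C * (f m : ℝ) < (f (m + 1) : ℝ) := hstep m (by omega)
  have h3 : C ^ L < (f L : ℝ) := by
    rw [hm]
    calc C ^ (m + 1) = C * C ^ m := by ring
      _ ≤ C * (f m : ℝ) := mul_le_mul_of_nonneg_left h1 hC0.le
      _ < _ := h2
  have h4 : (f L : ℝ) ≤ n := Nat.cast_le.2 (hfle L)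
  linarith
end

section
/- Let (X, d) be a metric space, S ⊆ X a nonempty subset, ε > 0, and let φ : X → ℝ be a (1+ε)-approximate S-potential with constant value c on S. Let r > 0 and u, v ∈ X satisfy d(v, S) ≤ r and d(u, S) ≥ (1+2ε)·r, where d(x, S) := inf_{s∈S} d(x, s). Then φ(u) − φ(v) ≥ (ε/(1+ε))·r. -/
open Metric

/-- Separation property of approximate potentials: if `φ` is a `(1+ε)`-approximate
`S`-potential (1-Lipschitz, constant value `c` on `S`, and `φ x - c ≥ d(x,S)/(1+ε)`
for all `x`), and `d(v,S) ≤ r` while `d(u,S) ≥ (1+2ε)·r`, then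
`φ u - φ v ≥ (ε/(1+ε))·r`. -/
theorem approx_potential_separation
    {X : Type*} [MetricSpace X] (S : Set X) (hS : S.Nonempty)
    (ε : ℝ) (hε : 0 < ε)
    (φ : X → ℝ) (c : ℝ)
    (hLip : LipschitzWith 1 φ)
    (hconst : ∀ s ∈ S, φ s = c)
    (hlow : ∀ x, infDist x S / (1 + ε) ≤ φ x - c)
    (r : ℝ) (hr : 0 < r) (u v : X)
    (hv : infDist v S ≤ r) (hu : (1 + 2 * ε) * r ≤ infDist u S) :
    ε / (1 + ε) * r ≤ φ u - φ v := by
  have hε1 : (0:ℝ) < 1 + ε := by linarith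
  have hub : φ v - c ≤ infDist v S := by
    by_contra h
    push_neg at h
    obtain ⟨s, hsS, hds⟩ := (infDist_lt_iff hS).1 h
    have := hLip.dist_le_mul v s
    rw [Real.dist_eq, hconst s hsS] at this
    have h2 : φ v - c ≤ dist v s := le_trans (le_abs_self _) (by simpa using this)
    linarith
  have hlb : (1 + 2 * ε) * r / (1 + ε) ≤ φ u - c := by
    have : (1 + 2 * ε) * r / (1 + ε) ≤ infDist u S / (1 + ε) := by gcongr
    linarith [hlow u]
  have key : (1 + 2 * ε) * r / (1 + ε) - r = ε / (1 + ε) * r := by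
    field_simp; ring
  linarith
end

section
/- Let G be a finite connected simple graph on vertex set V equipped with a linear order ≤, let d_G denote the (unweighted) shortest-path distance in G, and let β ∈ (0, 1]. Let (δ_u)_{u∈V} be independent random variables, each with the geometric distribution P(δ_u = j) = β·(1−β)^j for j ∈ ℕ. Assign to each vertex v the center u(v) := the ≤-least element of the set of minimizers of u ↦ d_G(u, v) − δ_u over u ∈ V. Then for every edge {v, v'} of G, the probability that u(v) ≠ u(v') (i.e. the endpoints of the edge lie in different clusters) is at most β. -/
open MeasureTheory
open scoped ENNReal

open scoped Classical in
/-- The center assigned to vertex `v` by the ESTCluster procedure: the `≤`-least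
minimizer of `u ↦ d_G(u, v) - δ_u` over all vertices `u`. -/
noncomputable def estCenter {V : Type*} [Fintype V] [LinearOrder V] [Nonempty V]
    (G : SimpleGraph V) (δ : V → ℕ) (v : V) : V :=
  (Finset.univ.filter fun u : V =>
      ∀ u' : V, ((G.dist u v : ℤ) - (δ u : ℤ)) ≤ ((G.dist u' v : ℤ) - (δ u' : ℤ))).min'
    (by
      obtain ⟨u, -, hu⟩ := Finset.exists_min_image (Finset.univ : Finset V)
        (fun u : V => ((G.dist u v : ℤ) - (δ u : ℤ))) ⟨Classical.arbitrary V, Finset.mem_univ _⟩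
      exact ⟨u, Finset.mem_filter.mpr ⟨Finset.mem_univ _, fun u' => hu u' (Finset.mem_univ _)⟩⟩)

section ESTAux

variable {V : Type*} [Fintype V] [LinearOrder V] [Nonempty V]

/-- the argmax set of `u ↦ δ u - c u` -/
def estArgmax (c δ : V → ℕ) : Finset V :=
  Finset.univ.filter fun u => ∀ u', (δ u' : ℤ) - c u' ≤ (δ u : ℤ) - c u

lemma estArgmax_nonempty (c δ : V → ℕ) : (estArgmax c δ).Nonempty := by
  obtain ⟨u, -, hu⟩ := Finset.exists_max_image (Finset.univ : Finset V)
    (fun u : V => (δ u : ℤ) - c u) ⟨Classical.arbitrary V, Finset.mem_univ _⟩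
  exact ⟨u, Finset.mem_filter.mpr ⟨Finset.mem_univ _, fun u' => hu u' (Finset.mem_univ _)⟩⟩

/-- the least element of the argmax set -/
noncomputable def estW (c δ : V → ℕ) : V := (estArgmax c δ).min' (estArgmax_nonempty c δ)

lemma estW_spec (c δ : V → ℕ) (u : V) :
    (δ u : ℤ) - c u ≤ (δ (estW c δ) : ℤ) - c (estW c δ) := by
  have := Finset.min'_mem (estArgmax c δ) (estArgmax_nonempty c δ)
  exact (Finset.mem_filter.mp this).2 u

lemma estW_le (c δ : V → ℕ) (u : V) (hu : u ∈ estArgmax c δ) : estW c δ ≤ u :=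
  Finset.min'_le _ _ hu

lemma estW_update (c δ : V → ℕ) (k : ℕ) :
    estW c (Function.update δ (estW c δ) (δ (estW c δ) + k)) = estW c δ := by
  set w := estW c δ with hw
  set δ' := Function.update δ w (δ w + k) with hδ'
  have hspec : ∀ u', (δ u' : ℤ) - c u' ≤ (δ w : ℤ) - c w := by
    intro u'; rw [hw]; exact estW_spec c δ u'
  have hZw : (δ' w : ℤ) - c w = ((δ w : ℤ) - c w) + k := by
    simp [hδ', Function.update_self]; push_cast; ring
  have hZu : ∀ u, u ≠ w → (δ' u : ℤ) - c u = (δ u : ℤ) - c u := by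
    intro u hu; simp [hδ', Function.update_of_ne hu]
  have hmem : w ∈ estArgmax c δ' := by
    refine Finset.mem_filter.mpr ⟨Finset.mem_univ _, fun u' => ?_⟩
    by_cases h : u' = w
    · subst h; exact le_refl _
    · rw [hZu u' h, hZw]
      have := hspec u'
      have hk : (0:ℤ) ≤ k := Int.ofNat_nonneg k
      omega
  refine le_antisymm (Finset.min'_le _ _ hmem) (Finset.le_min' _ _ _ ?_)
  intro u hu
  by_cases h : u = w
  · exact le_of_eq h.symm
  · have h1 : (δ' w : ℤ) - c w ≤ (δ' u : ℤ) - c u := (Finset.mem_filter.mp hu).2 w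
    rw [hZu u h, hZw] at h1
    have h2 := hspec u
    have hk : (0:ℤ) ≤ k := Int.ofNat_nonneg k
    have heq : (δ u : ℤ) - c u = (δ w : ℤ) - c w := by omega
    rw [hw]
    refine estW_le c δ u (Finset.mem_filter.mpr ⟨Finset.mem_univ _, fun u' => ?_⟩)
    rw [heq, hw]; exact hspec u'

/-- If `w0` beats everyone else by ≥ 1 and everyone below it (in the order) by ≥ 2
    in the shifted values `δ u - c u`, then `w0` is the estCenter for any target `x`
    whose distances are within `[c u, c u + 1]`. -/
lemma estCenter_eq_of_gap (G : SimpleGraph V) (δ c : V → ℕ) (x w0 : V)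
    (hx1 : ∀ u, (G.dist u x : ℤ) ≤ (c u : ℤ) + 1)
    (hx2 : ∀ u, (c u : ℤ) ≤ (G.dist u x : ℤ))
    (h1 : ∀ u, u ≠ w0 → (δ u : ℤ) - c u + 1 ≤ (δ w0 : ℤ) - c w0)
    (h2 : ∀ u, u < w0 → (δ u : ℤ) - c u + 2 ≤ (δ w0 : ℤ) - c w0) :
    estCenter G δ x = w0 := by
  classical
  unfold estCenter
  have hmem : w0 ∈ (Finset.univ.filter fun u : V =>
      ∀ u' : V, ((G.dist u x : ℤ) - (δ u : ℤ)) ≤ ((G.dist u' x : ℤ) - (δ u' : ℤ))) := by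
    refine Finset.mem_filter.mpr ⟨Finset.mem_univ _, fun u' => ?_⟩
    by_cases h : u' = w0
    · subst h; exact le_refl _
    · have := h1 u' h
      have := hx1 w0
      have := hx2 u'
      omega
  refine le_antisymm (Finset.min'_le _ _ hmem) (Finset.le_min' _ _ _ ?_)
  intro u hu
  by_contra hlt
  push_neg at hlt
  have hne : u ≠ w0 := ne_of_lt hlt
  have h3 : ((G.dist u x : ℤ) - (δ u : ℤ)) ≤ ((G.dist w0 x : ℤ) - (δ w0 : ℤ)) :=
    (Finset.mem_filter.mp hu).2 w0
  have := h2 u hlt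
  have := hx1 w0
  have := hx2 u
  omega

end ESTAux

section ESTInj

variable {V : Type*} [Fintype V] [LinearOrder V] [Nonempty V]

lemma est_key (G : SimpleGraph V) (v v' : V) (c : V → ℕ)
    (hxv : ∀ u, (G.dist u v : ℤ) ≤ (c u : ℤ) + 1)
    (hxv' : ∀ u, (G.dist u v' : ℤ) ≤ (c u : ℤ) + 1)
    (hcv : ∀ u, (c u : ℤ) ≤ (G.dist u v : ℤ))
    (hcv' : ∀ u, (c u : ℤ) ≤ (G.dist u v' : ℤ))
    (w : V) (δa δb : V → ℕ)
    (hcb : estCenter G δb v ≠ estCenter G δb v')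
    (hwa : estW c δa = w)
    (hoff : ∀ u, u ≠ w → δa u = δb u)
    (hlt : δa w < δb w) : False := by
  have hspa : ∀ u, (δa u : ℤ) - c u ≤ (δa w : ℤ) - c w := by
    intro u; rw [← hwa]; exact estW_spec c δa u
  have h1 : ∀ u, u ≠ w → (δb u : ℤ) - c u + 1 ≤ (δb w : ℤ) - c w := by
    intro u hu
    rw [← hoff u hu]
    have := hspa u
    omega
  by_cases hcase : ∀ u, u < w → (δb u : ℤ) - c u + 2 ≤ (δb w : ℤ) - c w
  · have ev := estCenter_eq_of_gap G δb c v w hxv hcv h1 hcase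
    have ev' := estCenter_eq_of_gap G δb c v' w hxv' hcv' h1 hcase
    exact hcb (by rw [ev, ev'])
  · push_neg at hcase
    obtain ⟨u0, hu0lt, hu0⟩ := hcase
    have hu0ne : u0 ≠ w := ne_of_lt hu0lt
    have heq0 : (δa u0 : ℤ) - c u0 = (δa w : ℤ) - c w := by
      have h5 := hoff u0 hu0ne
      have h6 := hspa u0
      omega
    have hmem : u0 ∈ estArgmax c δa := by
      refine Finset.mem_filter.mpr ⟨Finset.mem_univ _, fun u' => ?_⟩
      rw [heq0]; exact hspa u'
    have := estW_le c δa u0 hmem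
    rw [hwa] at this
    exact absurd this (not_le.mpr hu0lt)

lemma est_inj (G : SimpleGraph V) (v v' : V) (c : V → ℕ)
    (hxv : ∀ u, (G.dist u v : ℤ) ≤ (c u : ℤ) + 1)
    (hxv' : ∀ u, (G.dist u v' : ℤ) ≤ (c u : ℤ) + 1)
    (hcv : ∀ u, (c u : ℤ) ≤ (G.dist u v : ℤ))
    (hcv' : ∀ u, (c u : ℤ) ≤ (G.dist u v' : ℤ)) :
    Function.Injective (fun p : {δ : V → ℕ // estCenter G δ v ≠ estCenter G δ v'} × ℕ =>
      Function.update (p.1 : V → ℕ) (estW c p.1) ((p.1 : V → ℕ) (estW c p.1) + p.2)) := by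
  rintro ⟨⟨δ1, h1⟩, k1⟩ ⟨⟨δ2, h2⟩, k2⟩ heq
  dsimp only at heq
  have e1 := estW_update c δ1 k1
  have e2 := estW_update c δ2 k2
  rw [heq] at e1
  have hw : estW c δ1 = estW c δ2 := e1.symm.trans e2
  set w := estW c δ2 with hwdef
  have hoff : ∀ u, u ≠ w → δ1 u = δ2 u := by
    intro u hu
    have := congrFun heq u
    rwa [hw, Function.update_of_ne hu, Function.update_of_ne hu] at this
  have hww : δ1 w = δ2 w := by
    rcases lt_trichotomy (δ1 w) (δ2 w) with h | h | h
    · exact absurd (est_key G v v' c hxv hxv' hcv hcv' w δ1 δ2 h2 hw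
        hoff h) not_false
    · exact h
    · exact absurd (est_key G v v' c hxv hxv' hcv hcv' w δ2 δ1 h1 hwdef.symm
        (fun u hu => (hoff u hu).symm) h) not_false
  have hδ : δ1 = δ2 := by
    funext u
    by_cases hu : u = w
    · rw [hu]; exact hww
    · exact hoff u hu
  subst hδ
  have := congrFun heq w
  rw [hw, Function.update_self, Function.update_self] at this
  have hk : k1 = k2 := by omega
  subst hk
  rfl

end ESTInj

/-- ESTCluster guarantee: if each vertex `u` of a finite connected graph draws an
independent geometric shift `δ_u` (with `P(δ_u = j) = β·(1-β)^j`), and every vertex `v`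
joins the cluster of the `≤`-least minimizer of `u ↦ d_G(u,v) - δ_u`, then every edge
of `G` has its endpoints in different clusters with probability at most `β`. -/
theorem est_cluster_edge_cut_prob
    {V : Type*} [Fintype V] [LinearOrder V] [Nonempty V]
    (G : SimpleGraph V) (hG : G.Connected)
    (β : ℝ) (hβ0 : 0 < β) (hβ1 : β ≤ 1)
    (ν : Measure ℕ) [IsProbabilityMeasure ν]
    (hν : ∀ j : ℕ, ν {j} = ENNReal.ofReal (β * (1 - β) ^ j))
    (v v' : V) (hadj : G.Adj v v') :
    Measure.pi (fun _ : V => ν)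
        {δ : V → ℕ | estCenter G δ v ≠ estCenter G δ v'} ≤ ENNReal.ofReal β := by
  classical
  set c : V → ℕ := fun u => min (G.dist u v) (G.dist u v') with hc
  have hd1 : G.dist v' v = 1 := SimpleGraph.dist_eq_one_iff_adj.mpr hadj.symm
  have hd2 : G.dist v v' = 1 := SimpleGraph.dist_eq_one_iff_adj.mpr hadj
  have htri : ∀ u : V, G.dist u v ≤ G.dist u v' + 1 := by
    intro u
    have := hG.dist_triangle (u := u) (v := v') (w := v)
    rwa [hd1] at this
  have htri' : ∀ u : V, G.dist u v' ≤ G.dist u v + 1 := by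
    intro u
    have := hG.dist_triangle (u := u) (v := v) (w := v')
    rwa [hd2] at this
  have hmin : ∀ u : V, c u = G.dist u v ∨ c u = G.dist u v' := by
    intro u; exact min_choice _ _
  have hxv : ∀ u : V, (G.dist u v : ℤ) ≤ (c u : ℤ) + 1 := by
    intro u
    rcases hmin u with h | h <;> rw [h] <;> [skip; have := htri u] <;> push_cast <;> omega
  have hxv' : ∀ u : V, (G.dist u v' : ℤ) ≤ (c u : ℤ) + 1 := by
    intro u
    rcases hmin u with h | h <;> rw [h] <;> [have := htri' u; skip] <;> push_cast <;> omega
  have hcv : ∀ u : V, (c u : ℤ) ≤ (G.dist u v : ℤ) := by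
    intro u; exact_mod_cast Nat.cast_le.mpr (min_le_left _ _)
  have hcv' : ∀ u : V, (c u : ℤ) ≤ (G.dist u v' : ℤ) := by
    intro u; exact_mod_cast Nat.cast_le.mpr (min_le_right _ _)
  set μ := Measure.pi (fun _ : V => ν) with hμ
  set E := {δ : V → ℕ | estCenter G δ v ≠ estCenter G δ v'} with hE
  have hr0 : (0:ℝ) ≤ 1 - β := by linarith
  set r : ℝ≥0∞ := ENNReal.ofReal (1 - β) with hrdef
  set b : ℝ≥0∞ := ENNReal.ofReal β with hbdef
  have hb0 : b ≠ 0 := (ENNReal.ofReal_pos.mpr hβ0).ne'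
  have hbt : b ≠ ⊤ := ENNReal.ofReal_ne_top
  have hsingle : ∀ δ : V → ℕ, μ {δ} = ∏ u : V, ν {δ u} := by
    intro δ; rw [← Set.univ_pi_singleton]; exact Measure.pi_pi _ _
  have hgeom : ∀ a k : ℕ, ν {a + k} = ν {a} * r ^ k := by
    intro a k
    rw [hν, hν, hrdef, ← ENNReal.ofReal_pow hr0,
      ← ENNReal.ofReal_mul (by positivity)]
    congr 1
    rw [pow_add]; ring
  have hupd : ∀ (δ : V → ℕ) (w0 : V) (k : ℕ),
      μ {Function.update δ w0 (δ w0 + k)} = μ {δ} * r ^ k := by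
    intro δ w0 k
    rw [hsingle, hsingle,
      ← Finset.mul_prod_erase Finset.univ _ (Finset.mem_univ w0),
      ← Finset.mul_prod_erase Finset.univ (fun u => ν {δ u}) (Finset.mem_univ w0)]
    have hrest : ∏ u ∈ Finset.univ.erase w0, ν {Function.update δ w0 (δ w0 + k) u}
        = ∏ u ∈ Finset.univ.erase w0, ν {δ u} :=
      Finset.prod_congr rfl fun u hu => by
        rw [Function.update_of_ne (Finset.ne_of_mem_erase hu)]
    rw [Function.update_self, hrest, hgeom (δ w0) k]
    ring
  have hEμ : μ E = ∑' δ : E, μ {(δ : V → ℕ)} := by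
    conv_lhs => rw [← Set.iUnion_of_singleton_coe E]
    exact measure_iUnion
      (fun a b hab => Set.disjoint_singleton.mpr (Subtype.val_injective.ne hab))
      (fun δ => measurableSet_singleton _)
  set Φ : E × ℕ → (V → ℕ) := fun p =>
    Function.update (p.1 : V → ℕ) (estW c p.1) ((p.1 : V → ℕ) (estW c p.1) + p.2) with hΦ
  have hinj : Function.Injective Φ := est_inj G v v' c hxv hxv' hcv hcv'
  have hsum : ∑' k : ℕ, r ^ k = b⁻¹ := by
    rw [ENNReal.tsum_geometric]
    congr 1
    have hadd : r + b = 1 := by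
      rw [hrdef, hbdef, ← ENNReal.ofReal_add hr0 hβ0.le]
      norm_num
    rw [← hadd, add_comm, ENNReal.add_sub_cancel_right ENNReal.ofReal_ne_top]
  have main : μ E * b⁻¹ ≤ 1 := by
    calc μ E * b⁻¹ = (∑' δ : E, μ {(δ : V → ℕ)}) * (∑' k : ℕ, r ^ k) := by
          rw [hEμ, hsum]
      _ = ∑' δ : E, (μ {(δ : V → ℕ)} * ∑' k : ℕ, r ^ k) := ENNReal.tsum_mul_right.symm
      _ = ∑' δ : E, ∑' k : ℕ, μ {(δ : V → ℕ)} * r ^ k := by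
          refine tsum_congr fun δ => ?_
          exact ENNReal.tsum_mul_left.symm
      _ = ∑' δ : E, ∑' k : ℕ, μ {Φ (δ, k)} := by
          refine tsum_congr fun δ => tsum_congr fun k => ?_
          rw [hΦ]
          exact (hupd (δ : V → ℕ) (estW c δ) k).symm
      _ = ∑' p : E × ℕ, μ {Φ p} := (ENNReal.tsum_prod' (f := fun p => μ {Φ p})).symm
      _ = μ (⋃ p : E × ℕ, {Φ p}) :=
          (measure_iUnion
            (fun p q hpq => Set.disjoint_singleton.mpr (fun h => hpq (hinj h)))
            (fun p => measurableSet_singleton _)).symm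
      _ ≤ 1 := (measure_mono (Set.subset_univ _)).trans_eq measure_univ
  have hfin := mul_le_mul_left main b
  rwa [one_mul, mul_assoc, ENNReal.inv_mul_cancel hb0 hbt, mul_one] at hfin
end

section
/- For every finite connected simple graph G with n ≥ 2 vertices and m edges, and every β ∈ (0, 1], there exist a partition of the vertex set of G into nonempty parts C₁, …, C_ℓ together with vertices u_i ∈ C_i such that: (a) every v ∈ C_i satisfies d_G(u_i, v) ≤ 3·ln(n)/β; and (b) the number of edges of G whose two endpoints lie in different parts is at most 2·β·m. -/
set_option linter.unusedSectionVars false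
set_option linter.unnecessarySimpa false

open Finset

namespace LDD

variable {V : Type*} [Fintype V] [DecidableEq V] (G : SimpleGraph V) [DecidableRel G.Adj]

/-- ball of radius `r` around `u`, growing by adjacency steps within `S`. -/
def ball (u : V) (S : Finset V) : ℕ → Finset V
  | 0 => {u}
  | r + 1 => ball u S r ∪ S.filter (fun v => ∃ w ∈ ball u S r, G.Adj w v)

/-- edges with all endpoints in `T` -/
def inE (T : Finset V) : Finset (Sym2 V) :=
  G.edgeFinset.filter (fun e => ∀ x ∈ e, x ∈ T)

/-- edges inside `S` crossing the boundary of `B` -/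
def cutE (S B : Finset V) : Finset (Sym2 V) :=
  G.edgeFinset.filter
    (fun e => (∀ x ∈ e, x ∈ S) ∧ (∃ x ∈ e, x ∈ B) ∧ (∃ x ∈ e, x ∉ B))

variable {G}

lemma ball_mono_succ (u : V) (S : Finset V) (r : ℕ) :
    ball G u S r ⊆ ball G u S (r + 1) := subset_union_left

lemma mem_ball_self (u : V) (S : Finset V) (r : ℕ) : u ∈ ball G u S r := by
  induction r with
  | zero => simp [ball]
  | succ r ih => exact ball_mono_succ u S r ih

lemma ball_subset {u : V} {S : Finset V} (hu : u ∈ S) (r : ℕ) :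
    ball G u S r ⊆ S := by
  induction r with
  | zero => simpa [ball] using hu
  | succ r ih =>
    refine union_subset ih ?_
    exact filter_subset _ _

lemma dist_le_of_mem_ball (hc : G.Connected) {u v : V} {S : Finset V} {r : ℕ}
    (hv : v ∈ ball G u S r) : G.dist u v ≤ r := by
  induction r generalizing v with
  | zero =>
    simp only [ball, mem_singleton] at hv
    simp [hv]
  | succ r ih =>
    rcases mem_union.1 hv with h | h
    · exact (ih h).trans (Nat.le_succ r)
    · obtain ⟨-, w, hw, hadj⟩ := mem_filter.1 h
      calc G.dist u v ≤ G.dist u w + G.dist w v := hc.dist_triangle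
        _ ≤ r + 1 := by
            have h1 := SimpleGraph.dist_eq_one_iff_adj.mpr hadj
            have h2 := ih hw
            omega

lemma inE_subset_inE {T T' : Finset V} (h : T ⊆ T') : inE G T ⊆ inE G T' := by
  intro e he
  rw [inE, mem_filter] at he ⊢
  exact ⟨he.1, fun x hx => h (he.2 x hx)⟩

lemma cutE_subset_inE_succ (u : V) (S : Finset V) (r : ℕ) :
    cutE G S (ball G u S r) ⊆ inE G (ball G u S (r + 1)) := by
  intro e he
  rw [cutE, mem_filter] at he
  obtain ⟨heG, hS, ⟨x, hx, hxB⟩, ⟨y, hy, hyB⟩⟩ := he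
  rw [inE, mem_filter]
  refine ⟨heG, ?_⟩
  intro z hz
  by_cases hzB : z ∈ ball G u S r
  · exact ball_mono_succ u S r hzB
  · -- z is adjacent to the endpoint in B
    have hzS : z ∈ S := hS z hz
    -- the other endpoint of e is x (in B), and z ≠ x
    have hzx : z ≠ x := fun h => hzB (h ▸ hxB)
    have hadj : G.Adj x z := by
      have heS : e ∈ G.edgeSet := SimpleGraph.mem_edgeFinset.1 heG
      induction e with
      | h a b =>
        simp only [Sym2.mem_iff] at hx hz
        rcases hx with rfl | rfl <;> rcases hz with rfl | rfl <;>
          first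
            | exact absurd rfl hzx
            | exact (SimpleGraph.mem_edgeSet G).1 heS
            | exact ((SimpleGraph.mem_edgeSet G).1 heS).symm
    rw [ball, mem_union]
    right
    exact mem_filter.2 ⟨hzS, x, hxB, hadj⟩

lemma disjoint_inE_cutE (u : V) (S : Finset V) (r : ℕ) :
    Disjoint (inE G (ball G u S r)) (cutE G S (ball G u S r)) := by
  rw [disjoint_left]
  intro e he he'
  rw [inE, mem_filter] at he
  rw [cutE, mem_filter] at he'
  obtain ⟨y, hy, hyB⟩ := he'.2.2.2
  exact hyB (he.2 y hy)

lemma growth (u : V) (S : Finset V) (r : ℕ) :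
    (inE G (ball G u S r)).card + (cutE G S (ball G u S r)).card
      ≤ (inE G (ball G u S (r + 1))).card := by
  rw [← card_union_of_disjoint (disjoint_inE_cutE u S r)]
  apply card_le_card
  exact union_subset (inE_subset_inE (ball_mono_succ u S r))
    (cutE_subset_inE_succ u S r)

lemma cutE_eq_empty_of_stable {u : V} {S : Finset V} {r : ℕ}
    (h : ball G u S (r + 1) = ball G u S r) :
    cutE G S (ball G u S r) = ∅ := by
  rw [eq_empty_iff_forall_notMem]
  intro e he
  have := cutE_subset_inE_succ u S r he
  rw [h, inE, mem_filter] at this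
  rw [cutE, mem_filter] at he
  obtain ⟨y, hy, hyB⟩ := he.2.2.2
  exact hyB (this.2 y hy)

lemma exists_stable (u : V) (S : Finset V) :
    ∃ r, ball G u S (r + 1) = ball G u S r := by
  by_contra hcon
  push_neg at hcon
  have hgrow : ∀ r : ℕ, r + 1 ≤ (ball G u S r).card := by
    intro r
    induction r with
    | zero => simpa [ball] using Nat.le_refl 1
    | succ r ih =>
      have hss : ball G u S r ⊂ ball G u S (r + 1) :=
        (ball_mono_succ u S r).ssubset_of_ne (fun h => hcon r h.symm)
      have := card_lt_card hss
      omega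
  have h1 := hgrow (Fintype.card V)
  have h2 : (ball G u S (Fintype.card V)).card ≤ Fintype.card V := by
    simpa using card_le_card (subset_univ (ball G u S (Fintype.card V)))
  omega

lemma log_one_add_ge {β : ℝ} (hβ0 : 0 < β) (hβ1 : β ≤ 1) :
    β * Real.log 2 ≤ Real.log (1 + β) := by
  have hc := strictConcaveOn_log_Ioi.concaveOn.2 (x := 1) (y := 2)
    (Set.mem_Ioi.2 one_pos) (Set.mem_Ioi.2 two_pos)
    (sub_nonneg.2 hβ1) hβ0.le (by ring : (1 - β) + β = 1)
  simp only [smul_eq_mul, Real.log_one, mul_zero, zero_add, mul_one] at hc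
  have h2 : (1 : ℝ) - β + β * 2 = 1 + β := by ring
  rwa [h2] at hc

lemma radius_bound {n m β : ℝ} (hn : 2 ≤ n) (hβ0 : 0 < β) (hβ1 : β ≤ 1)
    {r : ℕ} (hm : m ≤ n ^ 2 / 2) (h : (1 + β) ^ r ≤ m) :
    (r : ℝ) + 1 ≤ 3 * Real.log n / β := by
  have hn0 : (0:ℝ) < n := lt_of_lt_of_le two_pos hn
  have hm1 : (1:ℝ) ≤ m := le_trans (one_le_pow₀ (by linarith : (1:ℝ) ≤ 1 + β)) h
  have hlog : (r : ℝ) * Real.log (1 + β) ≤ Real.log m := by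
    calc (r : ℝ) * Real.log (1 + β) = Real.log ((1 + β) ^ r) := by rw [← Real.log_pow]
      _ ≤ Real.log m := Real.log_le_log (by positivity) h
  have hlogm : Real.log m ≤ 2 * Real.log n - Real.log 2 := by
    calc Real.log m ≤ Real.log (n ^ 2 / 2) := Real.log_le_log (by linarith) hm
      _ = 2 * Real.log n - Real.log 2 := by
          rw [Real.log_div (by positivity) two_ne_zero, Real.log_pow]
          push_cast; ring
  have hl2 : (0.6931471803 : ℝ) < Real.log 2 := Real.log_two_gt_d9
  have hlogn : Real.log 2 ≤ Real.log n := Real.log_le_log two_pos hn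
  have hconc := log_one_add_ge hβ0 hβ1
  have key : (r : ℝ) * (β * Real.log 2) ≤ 2 * Real.log n - Real.log 2 := by
    calc (r : ℝ) * (β * Real.log 2) ≤ (r : ℝ) * Real.log (1 + β) := by
          apply mul_le_mul_of_nonneg_left hconc (Nat.cast_nonneg r)
      _ ≤ Real.log m := hlog
      _ ≤ _ := hlogm
  rw [le_div_iff₀ hβ0]
  nlinarith [mul_nonneg (Real.log_nonneg (by linarith : (1:ℝ) ≤ n))
      (by linarith : (0:ℝ) ≤ 3 * Real.log 2 - 2)]

lemma one_cluster (hc : G.Connected) (hn : 2 ≤ Fintype.card V)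
    {β : ℝ} (hβ0 : 0 < β) (hβ1 : β ≤ 1) {S : Finset V} {u : V} (hu : u ∈ S) :
    ∃ B : Finset V, u ∈ B ∧ B ⊆ S ∧
      (∀ v ∈ B, (G.dist u v : ℝ) ≤ 3 * Real.log (Fintype.card V) / β) ∧
      ((cutE G S B).card : ℝ) ≤ β * (inE G B).card := by
  classical
  have hex : ∃ r, ((cutE G S (ball G u S r)).card : ℝ) ≤ β * (inE G (ball G u S r)).card := by
    obtain ⟨r, hr⟩ := exists_stable (G := G) u S
    refine ⟨r, ?_⟩
    rw [cutE_eq_empty_of_stable hr]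
    simp only [card_empty, Nat.cast_zero]
    positivity
  let r₀ := Nat.find hex
  have hstop : ((cutE G S (ball G u S r₀)).card : ℝ) ≤ β * (inE G (ball G u S r₀)).card :=
    Nat.find_spec hex
  have hmin : ∀ j, j < r₀ →
      β * ((inE G (ball G u S j)).card : ℝ) < (cutE G S (ball G u S j)).card :=
    fun j hj => lt_of_not_ge (Nat.find_min hex hj)
  have hlogn : 0 < Real.log (Fintype.card V) := by
    apply Real.log_pos
    exact_mod_cast hn
  -- radius bound
  have hrad : (r₀ : ℝ) ≤ 3 * Real.log (Fintype.card V) / β := by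
    rcases Nat.eq_zero_or_pos r₀ with h0 | hpos
    · rw [h0, Nat.cast_zero]
      positivity
    · obtain ⟨k, hk⟩ : ∃ k, r₀ = k + 1 := ⟨r₀ - 1, by omega⟩
      have hchain : ∀ j, j ≤ k → ((1 + β) ^ j : ℝ) ≤ (inE G (ball G u S (j + 1))).card := by
        intro j hj
        induction j with
        | zero =>
          have hnot := hmin 0 (by omega)
          have hcut1 : (1 : ℝ) ≤ (cutE G S (ball G u S 0)).card := by
            have : (0:ℝ) ≤ β * (inE G (ball G u S 0)).card := by positivity
            have hlt : (0:ℝ) < (cutE G S (ball G u S 0)).card := lt_of_le_of_lt this hnot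
            exact_mod_cast Nat.one_le_iff_ne_zero.2 (by exact_mod_cast hlt.ne')
          have hg := growth (G := G) u S 0
          have : (1:ℝ) ≤ (inE G (ball G u S 1)).card := by
            calc (1:ℝ) ≤ (cutE G S (ball G u S 0)).card := hcut1
              _ ≤ ((inE G (ball G u S 0)).card + (cutE G S (ball G u S 0)).card : ℕ) := by
                  exact_mod_cast Nat.le_add_left _ _
              _ ≤ _ := by exact_mod_cast hg
          simpa using this
        | succ j ih =>
          have hIH := ih (by omega)
          have hnot := hmin (j + 1) (by omega)
          have hg := growth (G := G) u S (j + 1)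
          have hg' : ((inE G (ball G u S (j + 1))).card : ℝ)
              + (cutE G S (ball G u S (j + 1))).card
              ≤ (inE G (ball G u S (j + 2))).card := by exact_mod_cast hg
          calc ((1 + β) ^ (j + 1) : ℝ)
              = (1 + β) ^ j + β * (1 + β) ^ j := by ring
            _ ≤ ((inE G (ball G u S (j + 1))).card : ℝ)
                + β * (inE G (ball G u S (j + 1))).card := by
                have hb : (0:ℝ) ≤ β := hβ0.le
                have := mul_le_mul_of_nonneg_left hIH hb
                linarith
            _ ≤ ((inE G (ball G u S (j + 1))).card : ℝ)
                + (cutE G S (ball G u S (j + 1))).card := by linarith [hnot]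
            _ ≤ _ := hg'
      have hmS : ((inE G (ball G u S (k + 1))).card : ℝ) ≤ (Fintype.card V : ℝ) ^ 2 / 2 := by
        have h1 : (inE G (ball G u S (k + 1))).card ≤ G.edgeFinset.card :=
          card_le_card (filter_subset _ _)
        have h2 : G.edgeFinset.card ≤ (Fintype.card V).choose 2 :=
          SimpleGraph.card_edgeFinset_le_card_choose_two
        have h3 : ((Fintype.card V).choose 2 : ℝ)
            = (Fintype.card V : ℝ) * ((Fintype.card V : ℝ) - 1) / 2 := by
          rw [Nat.cast_choose_two]
        have h4 : ((inE G (ball G u S (k + 1))).card : ℝ) ≤ ((Fintype.card V).choose 2 : ℝ) := by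
          exact_mod_cast h1.trans h2
        rw [h3] at h4
        nlinarith [h4, (by positivity : (0:ℝ) ≤ (Fintype.card V : ℝ))]
      have := radius_bound (n := (Fintype.card V : ℝ)) (m := ((inE G (ball G u S (k+1))).card : ℝ))
        (by exact_mod_cast hn) hβ0 hβ1 hmS (hchain k le_rfl)
      rw [hk]
      push_cast
      linarith
  refine ⟨ball G u S r₀, mem_ball_self u S r₀, ball_subset hu r₀, ?_, hstop⟩
  intro v hv
  have := dist_le_of_mem_ball hc hv
  calc (G.dist u v : ℝ) ≤ (r₀ : ℝ) := by exact_mod_cast this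
    _ ≤ _ := hrad

lemma mem_pair_cases {e : Sym2 V} {x y z : V} (hx : x ∈ e) (hy : y ∈ e)
    (hxy : x ≠ y) (hz : z ∈ e) : z = x ∨ z = y := by
  induction e with
  | h a b =>
    simp only [Sym2.mem_iff] at hx hy hz
    rcases hx with rfl | rfl <;> rcases hy with rfl | rfl <;> tauto

lemma sym2_exists_mem (e : Sym2 V) : ∃ z, z ∈ e := by
  induction e with
  | h a b => exact ⟨a, Sym2.mem_mk_left a b⟩

lemma decompose (hc : G.Connected) (hn : 2 ≤ Fintype.card V)
    {β : ℝ} (hβ0 : 0 < β) (hβ1 : β ≤ 1) :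
    ∀ (N : ℕ) (S : Finset V), S.card ≤ N → ∃ f : V → V,
      (∀ v ∈ S, f v ∈ S) ∧ (∀ v ∈ S, f (f v) = f v) ∧
      (∀ v ∈ S, (G.dist (f v) v : ℝ) ≤ 3 * Real.log (Fintype.card V) / β) ∧
      (∀ v, v ∉ S → f v = v) ∧
      ((G.edgeFinset.filter
          (fun e => (∀ x ∈ e, x ∈ S) ∧ ∃ x ∈ e, ∃ y ∈ e, f x ≠ f y)).card : ℝ)
        ≤ β * (inE G S).card := by
  classical
  intro N
  induction N with
  | zero =>
    intro S hS
    have hSe : S = ∅ := card_eq_zero.1 (Nat.le_zero.1 hS)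
    subst hSe
    refine ⟨id, by simp, by simp, by simp, fun v _ => rfl, ?_⟩
    have hfe : (G.edgeFinset.filter
        (fun e => (∀ x ∈ e, x ∈ (∅ : Finset V)) ∧ ∃ x ∈ e, ∃ y ∈ e, id x ≠ id y)) = ∅ := by
      rw [eq_empty_iff_forall_notMem]
      intro e he
      rw [mem_filter] at he
      obtain ⟨z, hz⟩ := sym2_exists_mem e
      exact absurd (he.2.1 z hz) (notMem_empty z)
    rw [hfe]
    simp only [card_empty, Nat.cast_zero]
    positivity
  | succ N ih =>
    intro S hS
    rcases S.eq_empty_or_nonempty with hSe | ⟨u, hu⟩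
    · subst hSe
      refine ⟨id, by simp, by simp, by simp, fun v _ => rfl, ?_⟩
      have hfe : (G.edgeFinset.filter
          (fun e => (∀ x ∈ e, x ∈ (∅ : Finset V)) ∧ ∃ x ∈ e, ∃ y ∈ e, id x ≠ id y)) = ∅ := by
        rw [eq_empty_iff_forall_notMem]
        intro e he
        rw [mem_filter] at he
        obtain ⟨z, hz⟩ := sym2_exists_mem e
        exact absurd (he.2.1 z hz) (notMem_empty z)
      rw [hfe]
      simp only [card_empty, Nat.cast_zero]
      positivity
    · obtain ⟨B, huB, hBS, hdist, hcut⟩ := one_cluster hc hn hβ0 hβ1 hu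
      set S' := S \ B with hS'
      have hS'card : S'.card ≤ N := by
        have h1 : S'.card < S.card := by
          apply card_lt_card
          rw [hS']
          constructor
          · exact sdiff_subset
          · intro hsub
            exact absurd (hsub (hBS huB)) (by simp [huB])
        omega
      obtain ⟨f', hf'S, hf'fix, hf'dist, hf'id, hf'cut⟩ := ih S' hS'card
      set f : V → V := fun v => if v ∈ B then u else f' v with hf
      have hfB : ∀ v ∈ B, f v = u := fun v hv => by simp [hf, hv]
      have hfS' : ∀ v, v ∉ B → f v = f' v := fun v hv => by simp [hf, hv]
      have hmemS' : ∀ v ∈ S, v ∉ B → v ∈ S' := fun v hv hvB => by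
        rw [hS']; exact mem_sdiff.2 ⟨hv, hvB⟩
      have hS'notB : ∀ v ∈ S', v ∉ B := fun v hv => (mem_sdiff.1 hv).2
      refine ⟨f, ?_, ?_, ?_, ?_, ?_⟩
      · intro v hv
        by_cases hvB : v ∈ B
        · rw [hfB v hvB]; exact hBS huB
        · rw [hfS' v hvB]
          exact sdiff_subset (hf'S v (hmemS' v hv hvB))
      · intro v hv
        by_cases hvB : v ∈ B
        · rw [hfB v hvB, hfB u huB]
        · rw [hfS' v hvB]
          have h1 : f' v ∈ S' := hf'S v (hmemS' v hv hvB)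
          rw [hfS' (f' v) (hS'notB _ h1)]
          exact hf'fix v (hmemS' v hv hvB)
      · intro v hv
        by_cases hvB : v ∈ B
        · rw [hfB v hvB]; exact hdist v hvB
        · rw [hfS' v hvB]; exact hf'dist v (hmemS' v hv hvB)
      · intro v hv
        have hvB : v ∉ B := fun h => hv (hBS h)
        rw [hfS' v hvB]
        exact hf'id v (fun h => hv (sdiff_subset h))
      · -- cut bound
        have hsub : (G.edgeFinset.filter
              (fun e => (∀ x ∈ e, x ∈ S) ∧ ∃ x ∈ e, ∃ y ∈ e, f x ≠ f y))
            ⊆ cutE G S B ∪ (G.edgeFinset.filter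
              (fun e => (∀ x ∈ e, x ∈ S') ∧ ∃ x ∈ e, ∃ y ∈ e, f' x ≠ f' y)) := by
          intro e he
          rw [mem_filter] at he
          obtain ⟨heG, hSe, x, hx, y, hy, hxy⟩ := he
          by_cases hxB : x ∈ B <;> by_cases hyB : y ∈ B
          · exact absurd (by rw [hfB x hxB, hfB y hyB]) hxy
          · exact mem_union_left _ (mem_filter.2 ⟨heG, hSe, ⟨x, hx, hxB⟩, ⟨y, hy, hyB⟩⟩)
          · exact mem_union_left _ (mem_filter.2 ⟨heG, hSe, ⟨y, hy, hyB⟩, ⟨x, hx, hxB⟩⟩)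
          · apply mem_union_right
            have hne : x ≠ y := fun h => hxy (h ▸ rfl)
            refine mem_filter.2 ⟨heG, ?_, x, hx, y, hy, ?_⟩
            · intro z hz
              rcases mem_pair_cases hx hy hne hz with rfl | rfl
              · exact hmemS' z (hSe z hz) hxB
              · exact hmemS' z (hSe z hz) hyB
            · rwa [← hfS' x hxB, ← hfS' y hyB]
        have hdisj : Disjoint (inE G B) (inE G S') := by
          rw [disjoint_left]
          intro e he he'
          rw [inE, mem_filter] at he he'
          obtain ⟨z, hz⟩ := sym2_exists_mem e
          exact hS'notB z (he'.2 z hz) (he.2 z hz)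
        have hsubS : inE G B ∪ inE G S' ⊆ inE G S := by
          apply union_subset
          · exact inE_subset_inE hBS
          · exact inE_subset_inE sdiff_subset
        have hcards : (inE G B).card + (inE G S').card ≤ (inE G S).card := by
          rw [← card_union_of_disjoint hdisj]
          exact card_le_card hsubS
        calc ((G.edgeFinset.filter
              (fun e => (∀ x ∈ e, x ∈ S) ∧ ∃ x ∈ e, ∃ y ∈ e, f x ≠ f y)).card : ℝ)
            ≤ ((cutE G S B).card : ℝ) + ((G.edgeFinset.filter
              (fun e => (∀ x ∈ e, x ∈ S') ∧ ∃ x ∈ e, ∃ y ∈ e, f' x ≠ f' y)).card : ℝ) := by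
              have h1 := card_le_card hsub
              have h2 := card_union_le (cutE G S B) (G.edgeFinset.filter
                (fun e => (∀ x ∈ e, x ∈ S') ∧ ∃ x ∈ e, ∃ y ∈ e, f' x ≠ f' y))
              exact_mod_cast h1.trans h2
          _ ≤ β * (inE G B).card + β * (inE G S').card := add_le_add hcut hf'cut
          _ = β * ((inE G B).card + (inE G S').card) := by ring
          _ ≤ β * (inE G S).card := by
              apply mul_le_mul_of_nonneg_left _ hβ0.le
              exact_mod_cast hcards

end LDD

/-- Low-diameter decomposition: every finite connected graph `G` on `n ≥ 2` vertices with
`m` edges and every `β ∈ (0,1]` admit a partition of the vertices into nonempty parts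
(encoded by a surjective function `part : V → Fin ℓ`) with centers `u i` in each part,
such that every vertex is within unweighted distance `3·ln(n)/β` of the center of its
part, and the number of edges whose endpoints lie in different parts is at most `2βm`. -/
theorem low_diameter_decomposition
    {V : Type*} [Fintype V] (G : SimpleGraph V)
    (hG : G.Connected) (hn : 2 ≤ Fintype.card V)
    (β : ℝ) (hβ0 : 0 < β) (hβ1 : β ≤ 1) :
    ∃ (ℓ : ℕ) (part : V → Fin ℓ) (u : Fin ℓ → V),
      Function.Surjective part ∧
      (∀ i, part (u i) = i) ∧
      (∀ v : V, (G.dist (u (part v)) v : ℝ) ≤ 3 * Real.log (Fintype.card V) / β) ∧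
      (({e ∈ G.edgeSet | ∃ x ∈ e, ∃ y ∈ e, part x ≠ part y}.ncard : ℝ) ≤
        2 * β * G.edgeSet.ncard) := by
  classical
  obtain ⟨f, hfS, hffix, hfdist, -, hfcut⟩ :=
    LDD.decompose (G := G) hG hn hβ0 hβ1 Finset.univ.card Finset.univ le_rfl
  set T : Finset V := Finset.univ.image f with hT
  have hmemT : ∀ v, f v ∈ T := fun v => Finset.mem_image_of_mem f (Finset.mem_univ v)
  have hfixT : ∀ w ∈ T, f w = w := by
    intro w hw
    obtain ⟨v, -, rfl⟩ := Finset.mem_image.1 hw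
    exact hffix v (Finset.mem_univ v)
  set eT := T.equivFin with heT
  refine ⟨T.card, fun v => eT ⟨f v, hmemT v⟩, fun i => ((eT.symm i : T) : V), ?_, ?_, ?_, ?_⟩
  · intro i
    refine ⟨((eT.symm i : T) : V), ?_⟩
    show eT ⟨f ((eT.symm i : T) : V), hmemT _⟩ = i
    have h1 : f ((eT.symm i : T) : V) = ((eT.symm i : T) : V) := hfixT _ (eT.symm i).2
    have h2 : (⟨f ((eT.symm i : T) : V), hmemT _⟩ : T) = eT.symm i := Subtype.ext h1
    rw [h2, Equiv.apply_symm_apply]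
  · intro i
    show eT ⟨f ((eT.symm i : T) : V), hmemT _⟩ = i
    have h1 : f ((eT.symm i : T) : V) = ((eT.symm i : T) : V) := hfixT _ (eT.symm i).2
    have h2 : (⟨f ((eT.symm i : T) : V), hmemT _⟩ : T) = eT.symm i := Subtype.ext h1
    rw [h2, Equiv.apply_symm_apply]
  · intro v
    show (G.dist ((eT.symm (eT ⟨f v, hmemT v⟩) : T) : V) v : ℝ) ≤ _
    have h1 : ((eT.symm (eT ⟨f v, hmemT v⟩) : T) : V) = f v := by
      rw [Equiv.symm_apply_apply]
    rw [h1]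
    exact hfdist v (Finset.mem_univ v)
  · have hiff : ∀ x y : V,
        (eT ⟨f x, hmemT x⟩ ≠ eT ⟨f y, hmemT y⟩) ↔ f x ≠ f y := by
      intro x y
      constructor
      · intro h hf'
        exact h (congrArg eT (Subtype.ext hf'))
      · intro h hf'
        exact h (Subtype.ext_iff.1 (eT.injective hf'))
    have hseteq : {e ∈ G.edgeSet |
          ∃ x ∈ e, ∃ y ∈ e, eT ⟨f x, hmemT x⟩ ≠ eT ⟨f y, hmemT y⟩}
        = ↑(G.edgeFinset.filter
            (fun e => (∀ x ∈ e, x ∈ (Finset.univ : Finset V)) ∧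
              ∃ x ∈ e, ∃ y ∈ e, f x ≠ f y)) := by
      ext e
      simp only [Set.mem_setOf_eq, Finset.coe_filter, SimpleGraph.mem_edgeFinset,
        Finset.mem_univ, true_and, forall_const]
      constructor
      · rintro ⟨he, x, hx, y, hy, hxy⟩
        exact ⟨he, ⟨fun _ _ => trivial, x, hx, y, hy, (hiff x y).1 hxy⟩⟩
      · rintro ⟨he, -, x, hx, y, hy, hxy⟩
        exact ⟨he, x, hx, y, hy, (hiff x y).2 hxy⟩
    rw [hseteq, Set.ncard_coe_finset]
    have hinE : LDD.inE G Finset.univ = G.edgeFinset := by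
      rw [LDD.inE]
      apply Finset.filter_true_of_mem
      intro e _
      exact fun x _ => Finset.mem_univ x
    rw [hinE] at hfcut
    have hm : (G.edgeSet.ncard : ℝ) = (G.edgeFinset.card : ℝ) := by
      rw [← SimpleGraph.coe_edgeFinset, Set.ncard_coe_finset]
    rw [hm]
    have hnn : (0:ℝ) ≤ β * G.edgeFinset.card := by positivity
    calc ((G.edgeFinset.filter
          (fun e => (∀ x ∈ e, x ∈ (Finset.univ : Finset V)) ∧
            ∃ x ∈ e, ∃ y ∈ e, f x ≠ f y)).card : ℝ)
        ≤ β * G.edgeFinset.card := hfcut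
      _ ≤ 2 * β * G.edgeFinset.card := by linarith
end

section
/- There exists an absolute constant C₁ > 0 such that the following holds. Let G be a finite connected simple graph with n ≥ 2 vertices and m edges, let w assign a positive real weight to each edge of G, and let k ≥ 3 be a real number. Then there exists a connected spanning subgraph H of G with at most (n − 1) + C₁·m·ln(n)/k edges such that for every edge {u, v} of G there is a walk from u to v in H whose total w-weight is at most k²·w(u,v). Consequently H is a k²-spanner of G: every weighted distance in G is stretched by a factor at most k² in H. -/
open SimpleGraph

namespace UltraSpanner
set_option linter.unusedSectionVars false

noncomputable section
open Classical

variable {V : Type} [Fintype V] {Γ : SimpleGraph V}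

/-- Walk has support inside `S`. -/
def InS (S : Set V) {a b : V} (p : Γ.Walk a b) : Prop :=
  ∀ x ∈ p.support, x ∈ S

/-- Ball of radius `j` around `v` using walks inside `S`. -/
def Ball (Γ : SimpleGraph V) (S : Set V) (v : V) (j : ℕ) : Set V :=
  {u | ∃ p : Γ.Walk v u, p.length ≤ j ∧ InS S p}

lemma ball_mono {S : Set V} {v : V} {j j' : ℕ} (h : j ≤ j') :
    Ball Γ S v j ⊆ Ball Γ S v j' := by
  rintro u ⟨p, hp, hs⟩; exact ⟨p, hp.trans h, hs⟩

lemma self_mem_ball {S : Set V} {v : V} (hv : v ∈ S) (j : ℕ) : v ∈ Ball Γ S v j := by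
  refine ⟨Walk.nil, by simp, ?_⟩
  intro x hx; simp only [Walk.support_nil, List.mem_singleton] at hx; rwa [hx]

lemma ball_subset {S : Set V} {v : V} {j : ℕ} : Ball Γ S v j ⊆ S := by
  rintro u ⟨p, _, hs⟩; exact hs u p.end_mem_support

lemma mem_ball_zero {S : Set V} {v u : V} (h : u ∈ Ball Γ S v 0) : u = v := by
  obtain ⟨p, hp, -⟩ := h
  exact (Walk.eq_of_length_eq_zero (Nat.le_zero.mp hp)).symm

/-- level of `u`: least radius of a ball containing it. -/
def dd (Γ : SimpleGraph V) (S : Set V) (v u : V) : ℕ :=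
  if h : ∃ j, u ∈ Ball Γ S v j then Nat.find h else 0

lemma dd_le {S : Set V} {v u : V} {j : ℕ} (h : u ∈ Ball Γ S v j) : dd Γ S v u ≤ j := by
  rw [dd, dif_pos ⟨j, h⟩]
  exact Nat.find_le h

lemma mem_ball_dd {S : Set V} {v u : V} {j : ℕ} (h : u ∈ Ball Γ S v j) :
    u ∈ Ball Γ S v (dd Γ S v u) := by
  rw [dd, dif_pos ⟨j, h⟩]
  exact Nat.find_spec (⟨j, h⟩ : ∃ j, u ∈ Ball Γ S v j)

lemma dd_v {S : Set V} {v : V} (hv : v ∈ S) : dd Γ S v v = 0 :=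
  Nat.le_zero.mp (dd_le (self_mem_ball hv 0))

/-- a minimal-radius walk witnessing `u ∈ Ball (dd u)`. -/
def minwalk {S : Set V} {v u : V} {j : ℕ} (h : u ∈ Ball Γ S v j) : Γ.Walk v u :=
  Classical.choose (mem_ball_dd h)

lemma minwalk_length {S : Set V} {v u : V} {j : ℕ} (h : u ∈ Ball Γ S v j) :
    (minwalk h).length ≤ dd Γ S v u :=
  (Classical.choose_spec (mem_ball_dd h)).1

lemma minwalk_inS {S : Set V} {v u : V} {j : ℕ} (h : u ∈ Ball Γ S v j) :
    InS S (minwalk h) :=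
  (Classical.choose_spec (mem_ball_dd h)).2

lemma support_minwalk_mem_ball {S : Set V} {v u : V} {j : ℕ} (h : u ∈ Ball Γ S v j)
    {z : V} (hz : z ∈ (minwalk h).support) : z ∈ Ball Γ S v (dd Γ S v u) := by
  refine ⟨(minwalk h).takeUntil z hz, ?_, ?_⟩
  · exact ((minwalk h).length_takeUntil_le hz).trans (minwalk_length h)
  · intro x hx
    exact minwalk_inS h x ((minwalk h).support_takeUntil_subset hz hx)

lemma dd_lt_of_mem_support {S : Set V} {v u : V} {j : ℕ} (h : u ∈ Ball Γ S v j)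
    {z : V} (hz : z ∈ (minwalk h).support) (hzu : z ≠ u) :
    dd Γ S v z < dd Γ S v u := by
  have h3 := minwalk_length h
  have hIn := minwalk_inS h
  generalize hgen : minwalk h = p at *
  have hsplit := p.take_spec hz
  have hlen : (p.takeUntil z hz).length + (p.dropUntil z hz).length = p.length := by
    rw [← Walk.length_append, hsplit]
  have hdrop : 1 ≤ (p.dropUntil z hz).length := by
    by_contra hcon
    push_neg at hcon
    exact hzu (Walk.eq_of_length_eq_zero (Nat.lt_one_iff.mp hcon))
  have h1 : z ∈ Ball Γ S v ((p.takeUntil z hz).length) :=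
    ⟨p.takeUntil z hz, le_rfl, fun x hx => hIn x (p.support_takeUntil_subset hz hx)⟩
  have h2 := dd_le h1
  omega

lemma adj_mem_ball {S : Set V} {v u x : V} {j : ℕ} (h : u ∈ Ball Γ S v j)
    (hx : x ∈ S) (hadj : Γ.Adj u x) : x ∈ Ball Γ S v (dd Γ S v u + 1) := by
  refine ⟨(minwalk h).concat hadj, ?_, ?_⟩
  · rw [Walk.length_concat]
    exact Nat.add_le_add_right (minwalk_length h) 1
  · intro z hz
    rw [Walk.support_concat, List.mem_append] at hz
    rcases hz with hz | hz
    · exact minwalk_inS h z hz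
    · simp only [List.mem_singleton] at hz; rwa [hz]


/-! ### Short-cycle contradictions -/

lemma exists_sym2_rep (e : Sym2 V) : ∃ x y : V, e = s(x, y) :=
  e.inductionOn fun x y => ⟨x, y, rfl⟩

lemma no_flat_edge {S : Set V} {v : V} {ρ : ℕ}
    (hΓ : ∀ (a : V) (c : Γ.Walk a a), c.IsCycle → 2 * ρ + 2 < c.length)
    {x y : V} {j : ℕ} (hj : j ≤ ρ) (hx : x ∈ Ball Γ S v j) (hy : y ∈ Ball Γ S v j)
    (hadj : Γ.Adj x y) (hdd : dd Γ S v x = dd Γ S v y) : False := by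
  have hxy : x ≠ y := hadj.ne
  set W : Γ.Walk x y := (minwalk hx).reverse.append (minwalk hy) with hWdef
  have hW : s(x, y) ∉ W.edges := by
    rw [hWdef, Walk.edges_append, List.mem_append, Walk.edges_reverse, List.mem_reverse]
    rintro (hmem | hmem)
    · have h1 : y ∈ (minwalk hx).support := Walk.snd_mem_support_of_mem_edges _ hmem
      have := dd_lt_of_mem_support hx h1 hxy.symm
      omega
    · have h1 : x ∈ (minwalk hy).support := Walk.fst_mem_support_of_mem_edges _ hmem
      have := dd_lt_of_mem_support hy h1 hxy
      omega
  have hWlen : W.length ≤ 2 * j := by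
    have h1 := minwalk_length hx
    have h2 := minwalk_length hy
    have h3 := dd_le hx
    have h4 := dd_le hy
    rw [hWdef, Walk.length_append, Walk.length_reverse]
    omega
  set P := W.bypass with hPdef
  have hPle : P.length ≤ W.length := W.length_bypass_le
  have hc : (Walk.cons hadj.symm P).IsCycle := by
    rw [Walk.cons_isCycle_iff]
    refine ⟨W.bypass_isPath, fun hmem => hW ?_⟩
    rw [Sym2.eq_swap] at hmem
    exact W.edges_bypass_subset hmem
  have := hΓ y (Walk.cons hadj.symm P) hc
  have hlen : (Walk.cons hadj.symm P).length = P.length + 1 := Walk.length_cons _ _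
  omega

lemma no_two_down {S : Set V} {v : V} {ρ : ℕ}
    (hΓ : ∀ (a : V) (c : Γ.Walk a a), c.IsCycle → 2 * ρ + 2 < c.length)
    {x y₁ y₂ : V} {j : ℕ} (hj : j ≤ ρ) (hx : x ∈ Ball Γ S v j)
    (hy₁ : y₁ ∈ Ball Γ S v j) (hy₂ : y₂ ∈ Ball Γ S v j) (hne : y₁ ≠ y₂)
    (h1 : Γ.Adj x y₁) (h2 : Γ.Adj x y₂)
    (hd1 : dd Γ S v y₁ < dd Γ S v x) (hd2 : dd Γ S v y₂ < dd Γ S v x) : False := by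
  set W : Γ.Walk y₁ y₂ := (minwalk hy₁).reverse.append (minwalk hy₂) with hWdef
  have hxW : x ∉ W.support := by
    rw [hWdef, Walk.mem_support_append_iff, Walk.support_reverse, List.mem_reverse]
    rintro (hmem | hmem)
    · have := dd_lt_of_mem_support hy₁ hmem (fun hh => h1.ne' hh.symm)
      omega
    · have := dd_lt_of_mem_support hy₂ hmem (fun hh => h2.ne' hh.symm)
      omega
  have hWlen : W.length ≤ 2 * j := by
    have h3 := minwalk_length hy₁
    have h4 := minwalk_length hy₂
    have h5 := dd_le hy₁
    have h6 := dd_le hy₂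
    rw [hWdef, Walk.length_append, Walk.length_reverse]
    omega
  set P := W.bypass with hPdef
  have hPle : P.length ≤ W.length := W.length_bypass_le
  have hxP : x ∉ P.support := fun hh => hxW (W.support_bypass_subset hh)
  have hQpath : (Walk.cons h1 P).IsPath := by
    rw [Walk.cons_isPath_iff]
    exact ⟨W.bypass_isPath, hxP⟩
  have hc : (Walk.cons h2.symm (Walk.cons h1 P)).IsCycle := by
    rw [Walk.cons_isCycle_iff]
    refine ⟨hQpath, ?_⟩
    rw [Walk.edges_cons, List.mem_cons]
    rintro (heq | hmem)
    · rw [Sym2.eq_iff] at heq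
      rcases heq with ⟨-, hq⟩ | ⟨hq, -⟩
      · exact h1.ne hq
      · exact hne hq.symm
    · exact hxP (Walk.snd_mem_support_of_mem_edges P hmem)
  have := hΓ y₂ _ hc
  have hl1 : (Walk.cons h2.symm (Walk.cons h1 P)).length = P.length + 2 := by
    simp [Walk.length_cons]
  have h7 := dd_le hx
  have h3 := minwalk_length hy₁
  have h4 := minwalk_length hy₂
  have hWl : W.length = (minwalk hy₁).length + (minwalk hy₂).length := by
    rw [hWdef, Walk.length_append, Walk.length_reverse]
  omega

lemma no_two_cross {S : Set V} {v : V} {ρ : ℕ}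
    (hΓ : ∀ (a : V) (c : Γ.Walk a a), c.IsCycle → 2 * ρ + 2 < c.length)
    {x y z : V} {j : ℕ} (hj : j ≤ ρ) (hx : x ∈ Ball Γ S v j) (hy : y ∈ Ball Γ S v j)
    (hz : z ∉ Ball Γ S v j) (hxy : x ≠ y)
    (h1 : Γ.Adj z x) (h2 : Γ.Adj z y) : False := by
  set W : Γ.Walk x y := (minwalk hx).reverse.append (minwalk hy) with hWdef
  have hzW : z ∉ W.support := by
    rw [hWdef, Walk.mem_support_append_iff, Walk.support_reverse, List.mem_reverse]
    have h5 := dd_le hx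
    have h6 := dd_le hy
    rintro (hmem | hmem)
    · exact hz (ball_mono h5 (support_minwalk_mem_ball hx hmem))
    · exact hz (ball_mono h6 (support_minwalk_mem_ball hy hmem))
  have hWlen : W.length ≤ 2 * j := by
    have h3 := minwalk_length hx
    have h4 := minwalk_length hy
    have h5 := dd_le hx
    have h6 := dd_le hy
    rw [hWdef, Walk.length_append, Walk.length_reverse]
    omega
  set P := W.bypass with hPdef
  have hPle : P.length ≤ W.length := W.length_bypass_le
  have hzP : z ∉ P.support := fun hh => hzW (W.support_bypass_subset hh)
  have hQpath : (Walk.cons h1 P).IsPath := by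
    rw [Walk.cons_isPath_iff]
    exact ⟨W.bypass_isPath, hzP⟩
  have hc : (Walk.cons h2.symm (Walk.cons h1 P)).IsCycle := by
    rw [Walk.cons_isCycle_iff]
    refine ⟨hQpath, ?_⟩
    rw [Walk.edges_cons, List.mem_cons]
    rintro (heq | hmem)
    · rw [Sym2.eq_iff] at heq
      rcases heq with ⟨hq, hq2⟩ | ⟨hq, -⟩
      · rw [hq] at hy; exact hz hy
      · exact hxy hq.symm
    · exact hzP (Walk.snd_mem_support_of_mem_edges P hmem)
  have := hΓ y _ hc
  have hl1 : (Walk.cons h2.symm (Walk.cons h1 P)).length = P.length + 2 := by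
    simp [Walk.length_cons]
  omega


/-! ### Edge counting within a decomposition -/

instance : Finite (Sym2 V) :=
  Finite.of_surjective (fun p : V × V => s(p.1, p.2)) (fun e => by
    obtain ⟨x, y, rfl⟩ := exists_sym2_rep e; exact ⟨(x, y), rfl⟩)

/-- edges with all endpoints in `S` -/
def ES (Γ : SimpleGraph V) (S : Set V) : Set (Sym2 V) :=
  {e | e ∈ Γ.edgeSet ∧ ∀ x ∈ e, x ∈ S}

/-- edges inside `S` crossing the boundary of `C` -/
def EX (Γ : SimpleGraph V) (S C : Set V) : Set (Sym2 V) :=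
  {e | e ∈ Γ.edgeSet ∧ (∀ x ∈ e, x ∈ S) ∧ (∃ x ∈ e, x ∈ C) ∧ ¬∀ x ∈ e, x ∈ C}

lemma ES_split {S C : Set V} :
    ES Γ S ⊆ ES Γ C ∪ EX Γ S C ∪ ES Γ (S \ C) := by
  rintro e ⟨he, hsub⟩
  by_cases hall : ∀ x ∈ e, x ∈ C
  · exact Or.inl (Or.inl ⟨he, hall⟩)
  by_cases hex : ∃ x ∈ e, x ∈ C
  · exact Or.inl (Or.inr ⟨he, hsub, hex, hall⟩)
  · push_neg at hex
    exact Or.inr ⟨he, fun x hx => ⟨hsub x hx, hex x hx⟩⟩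

lemma ES_empty : ES Γ (∅ : Set V) = ∅ := by
  ext e
  simp only [ES, Set.mem_setOf_eq, Set.mem_empty_iff_false, iff_false]
  rintro ⟨he, hsub⟩
  obtain ⟨a, b, rfl⟩ := exists_sym2_rep e
  exact hsub a (Sym2.mem_mk_left a b)

lemma ncard_ES_ball {S : Set V} {v : V} {ρ : ℕ}
    (hΓ : ∀ (a : V) (c : Γ.Walk a a), c.IsCycle → 2 * ρ + 2 < c.length)
    (hv : v ∈ S) {j : ℕ} (hj : j ≤ ρ) :
    (ES Γ (Ball Γ S v j)).ncard ≤ (Ball Γ S v j).ncard - 1 := by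
  set C := Ball Γ S v j with hC
  have hspec : ∀ e ∈ ES Γ C, ∃ x y, e = s(x, y) ∧ Γ.Adj x y ∧ x ∈ C ∧ y ∈ C ∧
      dd Γ S v y < dd Γ S v x := by
    rintro e ⟨he, hsub⟩
    obtain ⟨a, b, rfl⟩ := exists_sym2_rep e
    have hadj : Γ.Adj a b := he
    have ha : a ∈ C := hsub a (Sym2.mem_mk_left a b)
    have hb : b ∈ C := hsub b (Sym2.mem_mk_right a b)
    rcases lt_trichotomy (dd Γ S v a) (dd Γ S v b) with h | h | h
    · exact ⟨b, a, Sym2.eq_swap.symm, hadj.symm, hb, ha, h⟩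
    · exact absurd h fun h' => no_flat_edge hΓ hj ha hb hadj h'
    · exact ⟨a, b, rfl, hadj, ha, hb, h⟩
  set Q : Sym2 V → Prop := fun e => ∃ x y, e = s(x, y) ∧ Γ.Adj x y ∧ x ∈ C ∧ y ∈ C ∧
      dd Γ S v y < dd Γ S v x with hQ
  set f : Sym2 V → V := fun e => if h : Q e then h.choose else v with hf
  have hfspec : ∀ (e : Sym2 V) (h : Q e), ∃ y, e = s(f e, y) ∧ Γ.Adj (f e) y ∧ f e ∈ C ∧
      y ∈ C ∧ dd Γ S v y < dd Γ S v (f e) := by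
    intro e h
    have heq : f e = h.choose := by rw [hf]; exact dif_pos h
    rw [heq]
    exact h.choose_spec
  have hmaps : ∀ e ∈ ES Γ C, f e ∈ C \ {v} := by
    intro e he
    obtain ⟨y, h1, h2, h3, h4, h5⟩ := hfspec e (hspec e he)
    refine ⟨h3, fun hfv => ?_⟩
    rw [Set.mem_singleton_iff] at hfv
    rw [hfv, dd_v hv] at h5
    exact Nat.not_lt_zero _ h5
  have hinj : Set.InjOn f (ES Γ C) := by
    intro e₁ he₁ e₂ he₂ hfe
    by_contra hne
    obtain ⟨y₁, k1, k2, k3, k4, k5⟩ := hfspec e₁ (hspec e₁ he₁)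
    obtain ⟨y₂, l1, l2, l3, l4, l5⟩ := hfspec e₂ (hspec e₂ he₂)
    rw [hfe] at k1 k2 k3 k5
    have hyne : y₁ ≠ y₂ := by
      rintro rfl
      exact hne (k1.trans l1.symm)
    exact no_two_down hΓ hj l3 k4 l4 hyne k2 l2 k5 l5
  have hcard := Set.ncard_le_ncard_of_injOn f hmaps hinj (Set.toFinite _)
  rwa [Set.ncard_diff_singleton_of_mem (self_mem_ball hv j)] at hcard

lemma ncard_EX_ball {S : Set V} {v : V} {ρ : ℕ}
    (hΓ : ∀ (a : V) (c : Γ.Walk a a), c.IsCycle → 2 * ρ + 2 < c.length)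
    (hv : v ∈ S) {j : ℕ} (hj : j ≤ ρ) :
    (EX Γ S (Ball Γ S v j)).ncard ≤ (Ball Γ S v (j + 1)).ncard - (Ball Γ S v j).ncard := by
  set C := Ball Γ S v j with hC
  have hspec : ∀ e ∈ EX Γ S C, ∃ z x, e = s(x, z) ∧ Γ.Adj z x ∧ x ∈ C ∧ z ∈ S ∧ z ∉ C := by
    rintro e ⟨he, hS, hex, hnall⟩
    obtain ⟨a, b, rfl⟩ := exists_sym2_rep e
    have hadj : Γ.Adj a b := he
    have haS : a ∈ S := hS a (Sym2.mem_mk_left a b)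
    have hbS : b ∈ S := hS b (Sym2.mem_mk_right a b)
    by_cases haC : a ∈ C
    · by_cases hbC : b ∈ C
      · refine absurd (fun x hx => ?_) hnall
        rcases Sym2.mem_iff.mp hx with rfl | rfl
        · exact haC
        · exact hbC
      · exact ⟨b, a, rfl, hadj.symm, haC, hbS, hbC⟩
    · by_cases hbC : b ∈ C
      · exact ⟨a, b, Sym2.eq_swap.symm, hadj, hbC, haS, haC⟩
      · obtain ⟨x, hx, hxC⟩ := hex
        rcases Sym2.mem_iff.mp hx with rfl | rfl
        · exact absurd hxC haC
        · exact absurd hxC hbC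
  set Q : Sym2 V → Prop := fun e => ∃ z x, e = s(x, z) ∧ Γ.Adj z x ∧ x ∈ C ∧ z ∈ S ∧
      z ∉ C with hQ
  set g : Sym2 V → V := fun e => if h : Q e then h.choose else v with hg
  have hgspec : ∀ (e : Sym2 V) (h : Q e), ∃ x, e = s(x, g e) ∧ Γ.Adj (g e) x ∧ x ∈ C ∧
      g e ∈ S ∧ g e ∉ C := by
    intro e h
    have heq : g e = h.choose := by rw [hg]; exact dif_pos h
    rw [heq]
    exact h.choose_spec
  have hmaps : ∀ e ∈ EX Γ S C, g e ∈ Ball Γ S v (j + 1) \ C := by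
    intro e he
    obtain ⟨x, h1, h2, h3, h4, h5⟩ := hgspec e (hspec e he)
    refine ⟨?_, h5⟩
    have := adj_mem_ball h3 h4 h2.symm
    exact ball_mono (by have := dd_le h3; omega) this
  have hinj : Set.InjOn g (EX Γ S C) := by
    intro e₁ he₁ e₂ he₂ hge
    by_contra hne
    obtain ⟨x₁, k1, k2, k3, k4, k5⟩ := hgspec e₁ (hspec e₁ he₁)
    obtain ⟨x₂, l1, l2, l3, l4, l5⟩ := hgspec e₂ (hspec e₂ he₂)
    rw [hge] at k1 k2 k5
    have hxne : x₁ ≠ x₂ := by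
      rintro rfl
      exact hne (k1.trans l1.symm)
    exact no_two_cross hΓ hj k3 l3 l5 hxne k2 l2
  have hcard := Set.ncard_le_ncard_of_injOn g hmaps hinj (Set.toFinite _)
  rwa [Set.ncard_diff (ball_mono (Nat.le_succ j))] at hcard


/-! ### Ball growth -/

lemma exists_slow_level {S : Set V} {v : V} {ρ : ℕ} {β : ℝ} (hβ0 : 0 ≤ β)
    (hβ : (Fintype.card V : ℝ) < β ^ (ρ + 1)) (hv : v ∈ S) :
    ∃ j ≤ ρ, ((Ball Γ S v (j + 1)).ncard : ℝ) < β * (Ball Γ S v j).ncard := by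
  by_contra hcon
  push_neg at hcon
  have key : ∀ i, i ≤ ρ + 1 → β ^ i ≤ ((Ball Γ S v i).ncard : ℝ) := by
    intro i
    induction i with
    | zero =>
      intro _
      have hB0 : Ball Γ S v 0 = {v} := by
        apply le_antisymm
        · intro u hu
          rw [Set.mem_singleton_iff]
          exact mem_ball_zero hu
        · intro u hu
          rw [Set.mem_singleton_iff] at hu
          subst hu
          exact self_mem_ball hv 0
      rw [hB0, Set.ncard_singleton]
      simp
    | succ i ih =>
      intro hi
      have hiρ : i ≤ ρ := by omega
      have h1 := hcon i hiρ
      have h2 := ih (by omega)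
      calc β ^ (i + 1) = β * β ^ i := by ring
        _ ≤ β * ((Ball Γ S v i).ncard : ℝ) := by
            exact mul_le_mul_of_nonneg_left h2 hβ0
        _ ≤ ((Ball Γ S v (i + 1)).ncard : ℝ) := h1
  have h3 := key (ρ + 1) le_rfl
  have h4 : ((Ball Γ S v (ρ + 1)).ncard : ℝ) ≤ (Fintype.card V : ℝ) := by
    have h5 := Set.ncard_le_ncard (Set.subset_univ (Ball Γ S v (ρ + 1))) Set.finite_univ
    rw [Set.ncard_univ, Nat.card_eq_fintype_card] at h5
    exact_mod_cast h5
  linarith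

/-! ### Core decomposition bound -/

lemma core {ρ : ℕ} {β : ℝ}
    (hΓ : ∀ (a : V) (c : Γ.Walk a a), c.IsCycle → 2 * ρ + 2 < c.length)
    (hβ1 : 1 ≤ β) (hβ : (Fintype.card V : ℝ) < β ^ (ρ + 1)) :
    ∀ (nn : ℕ) (S : Set V), S.ncard ≤ nn → ((ES Γ S).ncard : ℝ) ≤ β * S.ncard := by
  intro nn
  induction nn with
  | zero =>
    intro S hS
    have hSe : S = ∅ := (Set.ncard_eq_zero (Set.toFinite S)).mp (Nat.le_zero.mp hS)
    subst hSe
    rw [ES_empty, Set.ncard_empty, Set.ncard_empty]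
    norm_num
  | succ nn ih =>
    intro S hS
    rcases S.eq_empty_or_nonempty with rfl | ⟨v, hv⟩
    · rw [ES_empty, Set.ncard_empty, Set.ncard_empty]
      norm_num
    · obtain ⟨j, hj, hgrow⟩ := exists_slow_level (zero_le_one.trans hβ1) hβ hv
      have hCS : Ball Γ S v j ⊆ S := ball_subset
      have hvC : v ∈ Ball Γ S v j := self_mem_ball hv j
      have hC1 : 1 ≤ (Ball Γ S v j).ncard := (Set.ncard_pos (Set.toFinite _)).mpr ⟨v, hvC⟩
      have h1 := ncard_ES_ball hΓ hv hj
      have h2 := ncard_EX_ball hΓ hv hj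
      have hBS : Ball Γ S v (j + 1) ⊆ S := ball_subset
      have hCB : Ball Γ S v j ⊆ Ball Γ S v (j + 1) := ball_mono (Nat.le_succ j)
      have hca1 : (Ball Γ S v j).ncard ≤ (Ball Γ S v (j + 1)).ncard :=
        Set.ncard_le_ncard hCB (Set.toFinite _)
      have hcs : (Ball Γ S v j).ncard ≤ S.ncard := Set.ncard_le_ncard hCS (Set.toFinite _)
      have ha1s : (Ball Γ S v (j + 1)).ncard ≤ S.ncard := Set.ncard_le_ncard hBS (Set.toFinite _)
      have hSC : (S \ Ball Γ S v j).ncard = S.ncard - (Ball Γ S v j).ncard :=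
        Set.ncard_diff hCS (Set.toFinite _)
      have h3 := ih (S \ Ball Γ S v j) (by omega)
      have htot : (ES Γ S).ncard ≤ (ES Γ (Ball Γ S v j)).ncard + (EX Γ S (Ball Γ S v j)).ncard
          + (ES Γ (S \ Ball Γ S v j)).ncard := by
        calc (ES Γ S).ncard
            ≤ ((ES Γ (Ball Γ S v j) ∪ EX Γ S (Ball Γ S v j)) ∪ ES Γ (S \ Ball Γ S v j)).ncard :=
              Set.ncard_le_ncard ES_split (Set.toFinite _)
          _ ≤ (ES Γ (Ball Γ S v j) ∪ EX Γ S (Ball Γ S v j)).ncard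
              + (ES Γ (S \ Ball Γ S v j)).ncard := Set.ncard_union_le _ _
          _ ≤ _ := Nat.add_le_add_right (Set.ncard_union_le _ _) _
      have e1 : ((ES Γ (Ball Γ S v j)).ncard : ℝ) ≤ ((Ball Γ S v j).ncard : ℝ) - 1 := by
        have hc := (Nat.cast_le (α := ℝ)).mpr h1
        rw [Nat.cast_sub hC1, Nat.cast_one] at hc
        exact hc
      have e2 : ((EX Γ S (Ball Γ S v j)).ncard : ℝ)
          ≤ ((Ball Γ S v (j + 1)).ncard : ℝ) - ((Ball Γ S v j).ncard : ℝ) := by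
        have hc := (Nat.cast_le (α := ℝ)).mpr h2
        rwa [Nat.cast_sub hca1] at hc
      have e3 : ((ES Γ (S \ Ball Γ S v j)).ncard : ℝ)
          ≤ β * (S.ncard : ℝ) - β * ((Ball Γ S v j).ncard : ℝ) := by
        rw [hSC] at h3
        rw [Nat.cast_sub hcs, mul_sub] at h3
        exact h3
      have etot : ((ES Γ S).ncard : ℝ) ≤ ((ES Γ (Ball Γ S v j)).ncard : ℝ)
          + ((EX Γ S (Ball Γ S v j)).ncard : ℝ) + ((ES Γ (S \ Ball Γ S v j)).ncard : ℝ) := by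
        exact_mod_cast htot
      have hgrow' : ((Ball Γ S v (j + 1)).ncard : ℝ) ≤ β * ((Ball Γ S v j).ncard : ℝ) :=
        le_of_lt hgrow
      linarith

lemma core_edge_bound {ρ : ℕ} {β : ℝ}
    (hΓ : ∀ (a : V) (c : Γ.Walk a a), c.IsCycle → 2 * ρ + 2 < c.length)
    (hβ1 : 1 ≤ β) (hβ : (Fintype.card V : ℝ) < β ^ (ρ + 1)) :
    (Γ.edgeSet.ncard : ℝ) ≤ β * Fintype.card V := by
  have h := core hΓ hβ1 hβ (Set.univ : Set V).ncard Set.univ le_rfl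
  have hES : ES Γ (Set.univ : Set V) = Γ.edgeSet := by
    ext e
    simp [ES]
  rw [hES, Set.ncard_univ, Nat.card_eq_fintype_card] at h
  exact h

/-! ### Connected graphs have at least `n - 1` edges -/

lemma card_sub_one_le_ncard_edgeSet (hconn : Γ.Connected) :
    Fintype.card V - 1 ≤ Γ.edgeSet.ncard := by
  have hne : Nonempty V := hconn.nonempty
  obtain ⟨v⟩ := hne
  have hball : ∀ u : V, ∃ j, u ∈ Ball Γ Set.univ v j := by
    intro u
    obtain ⟨p⟩ := hconn.preconnected v u
    exact ⟨p.length, p, le_rfl, fun x _ => Set.mem_univ x⟩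
  set Q : V → Prop := fun u => ∃ y, Γ.Adj u y ∧ dd Γ Set.univ v y < dd Γ Set.univ v u with hQ
  have hQall : ∀ u : V, u ≠ v → Q u := by
    intro u huv
    obtain ⟨j, hu⟩ := hball u
    have hdd1 : 1 ≤ dd Γ Set.univ v u := by
      by_contra hcon
      push_neg at hcon
      have h0 : u ∈ Ball Γ Set.univ v 0 := by
        have := mem_ball_dd hu
        rwa [Nat.lt_one_iff.mp hcon] at this
      exact huv (mem_ball_zero h0)
    have hnotnil : ¬ (minwalk hu).reverse.Nil := by
      rw [Walk.not_nil_iff_lt_length, Walk.length_reverse]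
      have h2 := minwalk_length hu
      by_contra hcon
      push_neg at hcon
      exact huv (Walk.eq_of_length_eq_zero (Nat.le_zero.mp hcon)).symm
    obtain ⟨y, hadj, q, hq⟩ := Walk.not_nil_iff.mp hnotnil
    refine ⟨y, hadj, ?_⟩
    have hy : y ∈ (minwalk hu).support := by
      have : y ∈ (minwalk hu).reverse.support := by
        rw [hq]
        simp [Walk.support_cons]
      rwa [Walk.support_reverse, List.mem_reverse] at this
    exact dd_lt_of_mem_support hu hy (fun h => hadj.ne h.symm)
  set f : V → Sym2 V := fun u => if h : Q u then s(u, h.choose) else s(u, u) with hf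
  have hfspec : ∀ (u : V) (h : Q u), f u = s(u, h.choose) ∧ Γ.Adj u h.choose ∧
      dd Γ Set.univ v h.choose < dd Γ Set.univ v u := by
    intro u h
    exact ⟨by rw [hf]; exact dif_pos h, h.choose_spec.1, h.choose_spec.2⟩
  have hmaps : ∀ u ∈ (Set.univ \ {v} : Set V), f u ∈ Γ.edgeSet := by
    rintro u ⟨-, hu⟩
    rw [Set.mem_singleton_iff] at hu
    have h := hQall u hu
    obtain ⟨h1, h2, h3⟩ := hfspec u h
    rw [h1]
    exact h2
  have hinj : Set.InjOn f (Set.univ \ {v}) := by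
    rintro u₁ ⟨-, hu₁⟩ u₂ ⟨-, hu₂⟩ hfe
    rw [Set.mem_singleton_iff] at hu₁ hu₂
    by_contra hne
    obtain ⟨k1, k2, k3⟩ := hfspec u₁ (hQall u₁ hu₁)
    obtain ⟨l1, l2, l3⟩ := hfspec u₂ (hQall u₂ hu₂)
    rw [k1, l1] at hfe
    rw [Sym2.eq_iff] at hfe
    rcases hfe with ⟨h1, -⟩ | ⟨h1, h2⟩
    · exact hne h1
    · rw [← h1] at l3
      rw [h2] at k3
      omega
  have hcard := Set.ncard_le_ncard_of_injOn f hmaps hinj (Set.toFinite _)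
  rwa [Set.ncard_diff_singleton_of_mem (Set.mem_univ v), Set.ncard_univ,
    Nat.card_eq_fintype_card] at hcard


/-! ### The greedy spanner -/

variable (w : Sym2 V → ℝ) (k : ℝ)

def addOK (A : List (Sym2 V)) (e : Sym2 V) : Prop :=
  ∀ u v : V, e = s(u, v) →
    ¬∃ p : (SimpleGraph.fromEdgeSet {f | f ∈ A}).Walk u v,
      (p.edges.map w).sum ≤ k ^ 2 * w e

noncomputable def build : List (Sym2 V) → List (Sym2 V) → List (Sym2 V)
  | acc, [] => acc
  | acc, e :: l => build (if addOK w k acc e then acc ++ [e] else acc) l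

lemma build_prefix : ∀ (l acc : List (Sym2 V)),
    ∃ t, build w k acc l = acc ++ t ∧ t.Sublist l := by
  intro l
  induction l with
  | nil => intro acc; exact ⟨[], by simp [build], List.nil_sublist _⟩
  | cons e l ih =>
    intro acc
    show ∃ t, build w k (if addOK w k acc e then acc ++ [e] else acc) l = acc ++ t ∧
      t.Sublist (e :: l)
    by_cases h : addOK w k acc e
    · rw [if_pos h]
      obtain ⟨t, ht, hsub⟩ := ih (acc ++ [e])
      refine ⟨e :: t, ?_, hsub.cons₂ e⟩
      rw [ht, List.append_assoc]
      rfl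
    · rw [if_neg h]
      obtain ⟨t, ht, hsub⟩ := ih acc
      exact ⟨t, ht, hsub.cons e⟩

def GoodL (lst : List (Sym2 V)) : Prop :=
  ∀ (i : ℕ) (hi : i < lst.length) (u v : V), lst[i] = s(u, v) →
    ¬∃ p : (SimpleGraph.fromEdgeSet {f | f ∈ lst.take i}).Walk u v,
      (p.edges.map w).sum ≤ k ^ 2 * w (lst[i])

lemma goodL_append {acc : List (Sym2 V)} {e : Sym2 V} (hgood : GoodL w k acc)
    (hok : addOK w k acc e) : GoodL w k (acc ++ [e]) := by
  intro i hi u v hget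
  rw [List.length_append, List.length_singleton] at hi
  rcases lt_or_eq_of_le (Nat.lt_succ_iff.mp hi) with hlt | heq
  · have hget' : (acc ++ [e])[i]'(by rw [List.length_append]; omega) = acc[i]'hlt :=
      List.getElem_append_left hlt
    rw [hget'] at hget ⊢
    rw [List.take_append_of_le_length (le_of_lt hlt)]
    exact hgood i hlt u v hget
  · subst heq
    have hget' : (acc ++ [e])[acc.length]'(by simp) = e := by
      rw [List.getElem_append_right le_rfl]
      simp
    rw [hget'] at hget ⊢
    rw [List.take_left]
    exact hok u v hget

lemma build_good : ∀ (l acc : List (Sym2 V)), GoodL w k acc → GoodL w k (build w k acc l) := by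
  intro l
  induction l with
  | nil => intro acc h; exact h
  | cons e l ih =>
    intro acc h
    show GoodL w k (build w k (if addOK w k acc e then acc ++ [e] else acc) l)
    by_cases hok : addOK w k acc e
    · rw [if_pos hok]
      exact ih _ (goodL_append w k h hok)
    · rw [if_neg hok]
      exact ih _ h

lemma walk_transfer_subset {A B : Set (Sym2 V)} (hAB : A ⊆ B) {u v : V}
    (p : (SimpleGraph.fromEdgeSet A).Walk u v) :
    ∃ q : (SimpleGraph.fromEdgeSet B).Walk u v, q.edges = p.edges := by
  refine ⟨p.transfer _ (fun e he => ?_), p.edges_transfer _⟩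
  have h1 := p.edges_subset_edgeSet he
  rw [SimpleGraph.edgeSet_fromEdgeSet] at h1 ⊢
  exact ⟨hAB h1.1, h1.2⟩

lemma build_stretch {G : SimpleGraph V} (hw : ∀ e ∈ G.edgeSet, 0 < w e) (hk : 1 ≤ k ^ 2) :
    ∀ (l acc : List (Sym2 V)), (∀ e ∈ l, e ∈ G.edgeSet) → ∀ e ∈ l, ∀ u v : V, e = s(u, v) →
      ∃ p : (SimpleGraph.fromEdgeSet {f | f ∈ build w k acc l}).Walk u v,
        (p.edges.map w).sum ≤ k ^ 2 * w e := by
  intro l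
  induction l with
  | nil => intro acc _ e he; exact absurd he List.not_mem_nil
  | cons e' l ih =>
    intro acc hGE e he u v huv
    show ∃ p : (SimpleGraph.fromEdgeSet
        {f | f ∈ build w k (if addOK w k acc e' then acc ++ [e'] else acc) l}).Walk u v,
      (p.edges.map w).sum ≤ k ^ 2 * w e
    rcases List.mem_cons.mp he with rfl | hel
    · -- e is at the head
      by_cases hok : addOK w k acc e
      · rw [if_pos hok]
        have hmem : e ∈ build w k (acc ++ [e]) l := by
          obtain ⟨t, ht, -⟩ := build_prefix w k l (acc ++ [e])
          rw [ht]
          simp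
        have hadjG : G.Adj u v := by
          rw [← SimpleGraph.mem_edgeSet, ← huv]
          exact hGE e List.mem_cons_self
        have hadj : (SimpleGraph.fromEdgeSet
            {f | f ∈ build w k (acc ++ [e]) l}).Adj u v := by
          rw [SimpleGraph.fromEdgeSet_adj]
          exact ⟨by rw [← huv]; exact hmem, hadjG.ne⟩
        refine ⟨Walk.cons hadj Walk.nil, ?_⟩
        have hwe : 0 < w e := hw e (hGE e List.mem_cons_self)
        simp only [Walk.edges_cons, Walk.edges_nil, List.map_cons, List.map_nil,
          List.sum_cons, List.sum_nil, add_zero, ← huv]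
        nlinarith
      · rw [if_neg hok]
        rw [addOK] at hok
        push_neg at hok
        obtain ⟨u', v', huv', p, hp⟩ := hok
        obtain ⟨t, ht, -⟩ := build_prefix w k l acc
        have hsub : {f : Sym2 V | f ∈ acc} ⊆ {f : Sym2 V | f ∈ build w k acc l} := by
          intro f hf
          rw [Set.mem_setOf_eq, ht]
          exact List.mem_append_left t hf
        have heq : s(u', v') = s(u, v) := by rw [← huv', ← huv]
        rw [Sym2.eq_iff] at heq
        rcases heq with ⟨rfl, rfl⟩ | ⟨rfl, rfl⟩
        · obtain ⟨q, hq⟩ := walk_transfer_subset hsub p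
          exact ⟨q, by rw [hq]; exact hp⟩
        · obtain ⟨q, hq⟩ := walk_transfer_subset hsub p.reverse
          refine ⟨q, ?_⟩
          rw [hq, Walk.edges_reverse, List.map_reverse, List.sum_reverse]
          exact hp
    · exact ih _ (fun f hf => hGE f (List.mem_cons_of_mem e' hf)) e hel u v huv

lemma cycle_edge_path {Γ : SimpleGraph V} {a x y : V} (c : Γ.Walk a a) (hc : c.IsCycle)
    (he : s(x, y) ∈ c.edges) :
    ∃ q : Γ.Walk x y, s(x, y) ∉ q.edges ∧ (∀ f ∈ q.edges, f ∈ c.edges) ∧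
      q.length + 1 = c.length := by
  have hadj : Γ.Adj x y := c.adj_of_mem_edges he
  have hxy : x ≠ y := hadj.ne
  have hx : x ∈ c.support := c.fst_mem_support_of_mem_edges he
  have hc' : (c.rotate x hx).IsCycle := hc.rotate hx
  have hrot := c.rotate_edges x hx
  have hlen : (c.rotate x hx).length = c.length := by
    have h1 := hrot.perm.length_eq
    rw [Walk.length_edges, Walk.length_edges] at h1
    exact h1
  have he' : s(x, y) ∈ (c.rotate x hx).edges := hrot.mem_iff.mpr he
  have hmemsub : ∀ f ∈ (c.rotate x hx).edges, f ∈ c.edges := fun f hf => hrot.mem_iff.mp hf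
  have h3 := hc'.three_le_length
  have hnotnil : ¬ (c.rotate x hx).Nil := by
    rw [Walk.not_nil_iff_lt_length]
    omega
  obtain ⟨b, h₁, r, hr⟩ := Walk.not_nil_iff.mp hnotnil
  have hcyc2 : r.IsPath ∧ s(x, b) ∉ r.edges := by
    rw [← Walk.cons_isCycle_iff r h₁, ← hr]
    exact hc'
  have hlenr : (c.rotate x hx).length = r.length + 1 := by
    rw [hr, Walk.length_cons]
  by_cases hby : b = y
  · subst hby
    refine ⟨r.reverse, ?_, ?_, ?_⟩
    · rw [Walk.edges_reverse, List.mem_reverse]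
      exact hcyc2.2
    · intro f hf
      rw [Walk.edges_reverse, List.mem_reverse] at hf
      apply hmemsub
      rw [hr, Walk.edges_cons]
      exact List.mem_cons_of_mem _ hf
    · rw [Walk.length_reverse]
      omega
  · have her : s(x, y) ∈ r.edges := by
      have hh : s(x, y) ∈ (Walk.cons h₁ r).edges := hr ▸ he'
      rw [Walk.edges_cons, List.mem_cons] at hh
      rcases hh with heq | hh
      · exfalso
        rw [Sym2.eq_iff] at heq
        rcases heq with ⟨-, h⟩ | ⟨-, h⟩
        · exact hby (h.symm ▸ rfl)
        · exact hxy h.symm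
      · exact hh
    have hrrevnil : ¬ r.reverse.Nil := by
      rw [Walk.not_nil_iff_lt_length, Walk.length_reverse]
      by_contra hcon
      push_neg at hcon
      have hbx : b = x := Walk.eq_of_length_eq_zero (Nat.le_zero.mp hcon)
      omega
    obtain ⟨b₂, h₂, r₂, hr₂⟩ := Walk.not_nil_iff.mp hrrevnil
    have hrevpath : (Walk.cons h₂ r₂).IsPath := hr₂ ▸ hcyc2.1.reverse
    have hxnot : x ∉ r₂.support := (Walk.cons_isPath_iff h₂ r₂).mp hrevpath |>.2
    have hb₂ : b₂ = y := by
      have hmem : s(x, y) ∈ r.reverse.edges := by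
        rw [Walk.edges_reverse, List.mem_reverse]
        exact her
      rw [hr₂, Walk.edges_cons, List.mem_cons] at hmem
      rcases hmem with heq | hmem
      · rw [Sym2.eq_iff] at heq
        rcases heq with ⟨-, h⟩ | ⟨h, h'⟩
        · exact h.symm
        · exact absurd h'.symm hxy
      · exact absurd (r₂.fst_mem_support_of_mem_edges hmem) hxnot
    subst hb₂
    have hlenr₂ : r.length = r₂.length + 1 := by
      have hh : r.reverse.length = r₂.length + 1 := by rw [hr₂, Walk.length_cons]
      rw [Walk.length_reverse] at hh
      exact hh
    refine ⟨Walk.cons h₁ r₂.reverse, ?_, ?_, ?_⟩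
    · rw [Walk.edges_cons, List.mem_cons]
      rintro (heq | hmem)
      · rw [Sym2.eq_iff] at heq
        rcases heq with ⟨-, h⟩ | ⟨h, -⟩
        · exact hby h.symm
        · exact h₁.ne h
      · rw [Walk.edges_reverse, List.mem_reverse] at hmem
        exact hxnot (r₂.fst_mem_support_of_mem_edges hmem)
    · intro f hf
      rw [Walk.edges_cons, List.mem_cons] at hf
      apply hmemsub
      rw [hr, Walk.edges_cons]
      rcases hf with rfl | hf
      · exact List.mem_cons_self
      · rw [Walk.edges_reverse, List.mem_reverse] at hf
        have hf2 : f ∈ r.reverse.edges := by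
          rw [hr₂, Walk.edges_cons]
          exact List.mem_cons_of_mem _ hf
        rw [Walk.edges_reverse, List.mem_reverse] at hf2
        exact List.mem_cons_of_mem _ hf2
    · rw [Walk.length_cons, Walk.length_reverse]
      omega


lemma build_girth {G : SimpleGraph V} (hw : ∀ e ∈ G.edgeSet, 0 < w e)
    (L : List (Sym2 V)) (hGE : ∀ e ∈ L, e ∈ G.edgeSet)
    (hsort : L.Pairwise (fun a b => w a ≤ w b)) :
    ∀ (a : V) (c : (SimpleGraph.fromEdgeSet {f | f ∈ build w k [] L}).Walk a a),
      c.IsCycle → k ^ 2 + 1 < (c.length : ℝ) := by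
  intro a c hcyc
  obtain ⟨t, ht, hsubl⟩ := build_prefix w k L []
  have hgood : GoodL w k (build w k [] L) := by
    apply build_good
    intro i hi
    simp at hi
  generalize hgen : build w k [] L = lst at *
  have hlstL : lst.Sublist L := by
    rw [ht]
    simpa using hsubl
  have hlstsort : lst.Pairwise (fun a b => w a ≤ w b) := hsort.sublist hlstL
  have hlstG : ∀ f ∈ lst, f ∈ G.edgeSet := fun f hf => hGE f (hlstL.subset hf)
  have hel : ∀ f ∈ c.edges, f ∈ lst := by
    intro f hf
    have hh := c.edges_subset_edgeSet hf
    rw [SimpleGraph.edgeSet_fromEdgeSet] at hh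
    exact hh.1
  have h3 := hcyc.three_le_length
  have hnonempty : c.edges.toFinset.Nonempty := by
    have hlen : c.edges.length = c.length := c.length_edges
    have hne : c.edges ≠ [] := by
      intro hcon
      rw [hcon] at hlen
      simp at hlen
      omega
    obtain ⟨f, hf⟩ := List.exists_mem_of_ne_nil _ hne
    exact ⟨f, List.mem_toFinset.mpr hf⟩
  obtain ⟨e, heF, hemax⟩ := c.edges.toFinset.exists_max_image (fun f => lst.idxOf f) hnonempty
  rw [List.mem_toFinset] at heF
  obtain ⟨x, y, rfl⟩ := exists_sym2_rep e
  obtain ⟨q, hq1, hq2, hq3⟩ := cycle_edge_path c hcyc heF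
  have hemem : s(x, y) ∈ lst := hel _ heF
  have hi : lst.idxOf s(x, y) < lst.length := List.idxOf_lt_length_iff.mpr hemem
  have hgetl : lst[lst.idxOf s(x, y)]'hi = s(x, y) := List.getElem_idxOf hi
  have hidx : ∀ f ∈ q.edges, lst.idxOf f < lst.idxOf s(x, y) := by
    intro f hf
    have hfc := hq2 f hf
    have hflst := hel f hfc
    have hjf : lst.idxOf f < lst.length := List.idxOf_lt_length_iff.mpr hflst
    have hle : lst.idxOf f ≤ lst.idxOf s(x, y) := hemax f (List.mem_toFinset.mpr hfc)
    rcases lt_or_eq_of_le hle with h | h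
    · exact h
    · exfalso
      have hfe : f = s(x, y) := (List.idxOf_inj hflst).mp h
      exact hq1 (hfe ▸ hf)
  have hqtake : ∀ f ∈ q.edges, f ∈ lst.take (lst.idxOf s(x, y)) := by
    intro f hf
    have hjf : lst.idxOf f < lst.length := List.idxOf_lt_length_iff.mpr (hel f (hq2 f hf))
    have hlt := hidx f hf
    have hjt : lst.idxOf f < (lst.take (lst.idxOf s(x, y))).length := by
      rw [List.length_take]
      omega
    have hgt : (lst.take (lst.idxOf s(x, y)))[lst.idxOf f]'hjt = lst[lst.idxOf f]'hjf :=
      List.getElem_take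
    have := List.getElem_mem hjt
    rw [hgt, List.getElem_idxOf hjf] at this
    exact this
  have hdiag : ∀ f ∈ q.edges, ¬ f.IsDiag := fun f hf =>
    G.not_isDiag_of_mem_edgeSet (hlstG f (hel f (hq2 f hf)))
  have hq' : ∃ q' : (SimpleGraph.fromEdgeSet
      {f | f ∈ lst.take (lst.idxOf s(x, y))}).Walk x y, q'.edges = q.edges := by
    refine ⟨q.transfer _ (fun f hf => ?_), q.edges_transfer _⟩
    rw [SimpleGraph.edgeSet_fromEdgeSet]
    exact ⟨hqtake f hf, hdiag f hf⟩
  obtain ⟨q', hq'e⟩ := hq'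
  have hgg := hgood (lst.idxOf s(x, y)) hi x y hgetl
  rw [hgetl] at hgg
  have hsum : k ^ 2 * w s(x, y) < (q.edges.map w).sum := by
    by_contra hcon
    push_neg at hcon
    exact hgg ⟨q', by rw [hq'e]; exact hcon⟩
  have hwle : ∀ r ∈ q.edges.map w, r ≤ w s(x, y) := by
    intro r hr
    obtain ⟨f, hf, rfl⟩ := List.mem_map.mp hr
    have hjf : lst.idxOf f < lst.length := List.idxOf_lt_length_iff.mpr (hel f (hq2 f hf))
    have hlt := hidx f hf
    have hrel := hlstsort.rel_get_of_lt
      (a := ⟨lst.idxOf f, hjf⟩) (b := ⟨lst.idxOf s(x, y), hi⟩) hlt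
    rw [List.get_eq_getElem, List.get_eq_getElem] at hrel
    simp only at hrel
    rw [List.getElem_idxOf hjf, List.getElem_idxOf hi] at hrel
    exact hrel
  have hbound := List.sum_le_card_nsmul (q.edges.map w) (w s(x, y)) hwle
  rw [List.length_map, q.length_edges, nsmul_eq_mul] at hbound
  have hwpos : 0 < w s(x, y) := hw _ (hlstG _ hemem)
  have hql : (k ^ 2 : ℝ) < (q.length : ℝ) := by
    have h5 : k ^ 2 * w s(x, y) < (q.length : ℝ) * w s(x, y) := lt_of_lt_of_le hsum hbound
    exact (mul_lt_mul_iff_left₀ hwpos).mp h5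
  have hcl : (c.length : ℝ) = (q.length : ℝ) + 1 := by exact_mod_cast hq3.symm
  linarith


lemma greedy_exists {G : SimpleGraph V} (hconn : G.Connected)
    (hw : ∀ e ∈ G.edgeSet, 0 < w e) (hk : 3 ≤ k) :
    ∃ H : SimpleGraph V, H ≤ G ∧ H.Connected ∧
      (∀ (a : V) (c : H.Walk a a), c.IsCycle → k ^ 2 + 1 < (c.length : ℝ)) ∧
      (∀ u v : V, G.Adj u v → ∃ p : H.Walk u v, (p.edges.map w).sum ≤ k ^ 2 * w s(u, v)) := by
  classical
  letI : DecidableRel (fun a b : Sym2 V => w a ≤ w b) := Classical.decRel _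
  haveI hTot : IsTotal (Sym2 V) (fun a b => w a ≤ w b) := ⟨fun a b => le_total _ _⟩
  haveI hTrans : IsTrans (Sym2 V) (fun a b => w a ≤ w b) :=
    ⟨fun a b c h1 h2 => le_trans h1 h2⟩
  set L := List.insertionSort (fun a b => w a ≤ w b) G.edgeSet.toFinite.toFinset.toList
    with hL
  have hsort : L.Pairwise (fun a b => w a ≤ w b) := List.pairwise_insertionSort _ _
  have hLmem : ∀ e : Sym2 V, e ∈ L ↔ e ∈ G.edgeSet := by
    intro e
    rw [hL, (List.perm_insertionSort _ _).mem_iff, Finset.mem_toList,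
      Set.Finite.mem_toFinset]
  have hGE : ∀ e ∈ L, e ∈ G.edgeSet := fun e he => (hLmem e).mp he
  obtain ⟨t, ht, hsub⟩ := build_prefix w k L []
  have hbuildL : ∀ f ∈ build w k [] L, f ∈ G.edgeSet := by
    intro f hf
    rw [ht] at hf
    rw [List.nil_append] at hf
    exact hGE f (hsub.subset hf)
  have hHG : SimpleGraph.fromEdgeSet {f | f ∈ build w k [] L} ≤ G := by
    intro u v huv
    rw [SimpleGraph.fromEdgeSet_adj] at huv
    exact (G.mem_edgeSet).mp (hbuildL _ huv.1)
  have hstretch : ∀ u v : V, G.Adj u v →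
      ∃ p : (SimpleGraph.fromEdgeSet {f | f ∈ build w k [] L}).Walk u v,
        (p.edges.map w).sum ≤ k ^ 2 * w s(u, v) := by
    intro u v huv
    have hk2 : (1 : ℝ) ≤ k ^ 2 := by nlinarith
    exact build_stretch w k hw hk2 L [] hGE s(u, v) ((hLmem _).mpr huv) u v rfl
  refine ⟨SimpleGraph.fromEdgeSet {f | f ∈ build w k [] L}, hHG, ?_, ?_, hstretch⟩
  · haveI hne := hconn.nonempty
    have hpre : (SimpleGraph.fromEdgeSet {f | f ∈ build w k [] L}).Preconnected := by
      intro u v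
      obtain ⟨p⟩ := hconn.preconnected u v
      induction p with
      | nil => exact SimpleGraph.Reachable.refl _
      | cons h q ih =>
        obtain ⟨p1, -⟩ := hstretch _ _ h
        exact (SimpleGraph.Reachable.trans ⟨p1⟩ ih)
    exact ⟨hpre⟩
  · exact build_girth w k hw L hGE hsort


lemma cycle_length_le_card {Γ : SimpleGraph V} {a : V} {c : Γ.Walk a a} (hc : c.IsCycle) :
    c.length ≤ Fintype.card V := by
  have h1 : c.support.tail.Nodup := hc.support_nodup
  have h2 := h1.length_le_card
  have h3 : c.support.length = c.length + 1 := c.length_support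
  have h4 : c.support.tail.length = c.support.length - 1 := by simp [List.length_tail]
  omega

lemma tree_ncard {Γ : SimpleGraph V} (h : Γ.IsTree) :
    Γ.edgeSet.ncard = Fintype.card V - 1 := by
  classical
  haveI : Fintype Γ.edgeSet := Γ.edgeSet.toFinite.fintype
  have hcard := h.card_edgeFinset
  rw [Set.ncard_eq_toFinset_card']
  rw [← hcard]
  rfl

end
end UltraSpanner

set_option maxHeartbeats 2000000 in
open SimpleGraph in
/-- Ultra-spanner theorem (existence form): there is an absolute constant `C₁ > 0` so
that every finite connected weighted graph `G` on `n ≥ 2` vertices with `m` edges and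
every real `k ≥ 3` admit a connected spanning subgraph `H` with at most
`(n - 1) + C₁·m·ln(n)/k` edges in which every edge `{u,v}` of `G` can be replaced by a
walk of total weight at most `k²·w(u,v)`; consequently `H` is a `k²`-spanner of `G`. -/
theorem exists_ultra_spanner :
    ∃ C₁ : ℝ, 0 < C₁ ∧
      ∀ (V : Type) [Fintype V] (G : SimpleGraph V),
        G.Connected → 2 ≤ Fintype.card V →
        ∀ w : Sym2 V → ℝ, (∀ e ∈ G.edgeSet, 0 < w e) →
        ∀ k : ℝ, 3 ≤ k →
        ∃ H : SimpleGraph V, H ≤ G ∧ H.Connected ∧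
          ((H.edgeSet.ncard : ℝ) ≤
            ((Fintype.card V : ℝ) - 1) +
              C₁ * G.edgeSet.ncard * Real.log (Fintype.card V) / k) ∧
          ∀ u v : V, G.Adj u v →
            ∃ p : H.Walk u v, (p.edges.map w).sum ≤ k ^ 2 * w s(u, v) := by
  classical
  refine ⟨7, by norm_num, ?_⟩
  intro V _ G hconn hcard w hw k hk
  have hk0 : (0 : ℝ) < k := by linarith
  have hn2 : (2 : ℝ) ≤ (Fintype.card V : ℝ) := by exact_mod_cast hcard
  have hlogn0 : 0 ≤ Real.log (Fintype.card V) := Real.log_nonneg (by linarith)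
  have hm0 : (0 : ℝ) ≤ (G.edgeSet.ncard : ℝ) := Nat.cast_nonneg _
  have hnm : (Fintype.card V : ℝ) - 1 ≤ (G.edgeSet.ncard : ℝ) := by
    have h1 := UltraSpanner.card_sub_one_le_ncard_edgeSet hconn
    have h2 : ((Fintype.card V - 1 : ℕ) : ℝ) ≤ (G.edgeSet.ncard : ℝ) := by exact_mod_cast h1
    have h3 : (1 : ℕ) ≤ Fintype.card V := by omega
    rw [Nat.cast_sub h3] at h2
    simpa using h2
  obtain ⟨H, hHG, hHconn, hgirth, hstretch⟩ := UltraSpanner.greedy_exists w k hconn hw hk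
  by_cases hcase1 : (Fintype.card V : ℝ) ≤ k ^ 2 + 1
  · -- the greedy spanner is a tree
    have hacyc : H.IsAcyclic := by
      intro v c hc
      have h1 := UltraSpanner.cycle_length_le_card hc
      have h2 := hgirth v c hc
      have h3 : (c.length : ℝ) ≤ (Fintype.card V : ℝ) := by exact_mod_cast h1
      linarith
    have htree : H.IsTree := ⟨hHconn, hacyc⟩
    refine ⟨H, hHG, hHconn, ?_, hstretch⟩
    rw [UltraSpanner.tree_ncard htree]
    have h3 : (1 : ℕ) ≤ Fintype.card V := by omega
    rw [Nat.cast_sub h3]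
    have h4 : 0 ≤ 7 * (G.edgeSet.ncard : ℝ) * Real.log (Fintype.card V) / k := by positivity
    simp only [Nat.cast_one]
    linarith
  · push_neg at hcase1
    have hk29 : (9 : ℝ) ≤ k ^ 2 := by nlinarith
    by_cases hcase2 : k ^ 2 < 3 * Real.log (Fintype.card V)
    · -- take H = G
      refine ⟨G, le_rfl, hconn, ?_, ?_⟩
      · have hm1 : (1 : ℝ) ≤ (G.edgeSet.ncard : ℝ) := by nlinarith
        have hkln : k < Real.log (Fintype.card V) := by nlinarith
        have h2 : (G.edgeSet.ncard : ℝ) ≤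
            7 * (G.edgeSet.ncard : ℝ) * Real.log (Fintype.card V) / k := by
          rw [le_div_iff₀ hk0]
          nlinarith
        linarith
      · intro u v huv
        refine ⟨SimpleGraph.Walk.cons huv SimpleGraph.Walk.nil, ?_⟩
        have hwuv : 0 < w s(u, v) := hw _ huv
        simp only [SimpleGraph.Walk.edges_cons, SimpleGraph.Walk.edges_nil, List.map_cons,
          List.map_nil, List.sum_cons, List.sum_nil, add_zero]
        nlinarith
    · push_neg at hcase2
      refine ⟨H, hHG, hHconn, ?_, hstretch⟩
      set ρ := ⌊(k ^ 2 - 1) / 2⌋₊ with hρdef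
      have hρ4 : 4 ≤ ρ := Nat.le_floor (by push_cast; nlinarith)
      have hρle : (ρ : ℝ) ≤ (k ^ 2 - 1) / 2 := Nat.floor_le (by nlinarith)
      have hρgt : (k ^ 2 - 1) / 2 - 1 < (ρ : ℝ) := Nat.sub_one_lt_floor _
      have hρge : k ^ 2 / 3 ≤ (ρ : ℝ) := by nlinarith
      have hρpos : (0 : ℝ) < (ρ : ℝ) := by
        have : (4 : ℝ) ≤ (ρ : ℝ) := by exact_mod_cast hρ4
        linarith
      have hgirthN : ∀ (a : V) (c : H.Walk a a), c.IsCycle → 2 * ρ + 2 < c.length := by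
        intro a c hc
        have h1 := hgirth a c hc
        have h2 : ((2 * ρ + 2 : ℕ) : ℝ) < (c.length : ℝ) := by
          push_cast
          nlinarith
        exact_mod_cast h2
      have hn0 : (0 : ℝ) < (Fintype.card V : ℝ) := by linarith
      have hn10 : (10 : ℝ) ≤ (Fintype.card V : ℝ) := by nlinarith
      have hE1 : 1 ≤ Real.log (Fintype.card V) := by
        rw [Real.le_log_iff_exp_le hn0]
        have := Real.exp_one_lt_d9
        linarith
      set E := Real.log (Fintype.card V) with hEdef
      set β := Real.exp (E / ρ) with hβdef
      have hβn : (Fintype.card V : ℝ) = Real.exp E := (Real.exp_log hn0).symm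
      have hβpow : β ^ (ρ + 1) = Real.exp (((ρ + 1 : ℕ) : ℝ) * (E / ρ)) :=
        (Real.exp_nat_mul _ _).symm
      have hβgt : (Fintype.card V : ℝ) < β ^ (ρ + 1) := by
        rw [hβpow, hβn]
        apply Real.exp_lt_exp.mpr
        have hcast : ((ρ + 1 : ℕ) : ℝ) = (ρ : ℝ) + 1 := by push_cast; ring
        rw [hcast]
        have hfe : ((ρ : ℝ) + 1) * (E / ρ) = E + E / ρ := by
          field_simp
        rw [hfe]
        have : 0 < E / ρ := by positivity
        linarith
      have hβ1 : 1 ≤ β := Real.one_le_exp (by positivity)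
      have hcore := UltraSpanner.core_edge_bound hgirthN hβ1 hβgt
      have hk2pos : (0 : ℝ) < k ^ 2 := by positivity
      have ht1 : E / ρ ≤ 3 * E / k ^ 2 := by
        rw [div_le_div_iff₀ hρpos hk2pos]
        nlinarith
      have ht2 : 3 * E / k ^ 2 ≤ 1 := by
        rw [div_le_one hk2pos]
        linarith
      have hexp3 : β ≤ 3 := by
        rw [hβdef]
        calc Real.exp (E / ρ) ≤ Real.exp 1 := Real.exp_le_exp.mpr (le_trans ht1 ht2)
          _ ≤ 3 := by have := Real.exp_one_lt_d9; linarith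
      have hβm1 : β - 1 ≤ 9 * E / k ^ 2 := by
        have h5 := Real.add_one_le_exp (-(E / ρ))
        have h6 := Real.exp_pos (E / ρ)
        have h7 : Real.exp (-(E / ρ)) = (Real.exp (E / ρ))⁻¹ := Real.exp_neg _
        have h8 : β - 1 ≤ (E / ρ) * β := by
          rw [hβdef]
          have h9 : (1 - E / ρ) * Real.exp (E / ρ) ≤ 1 := by
            rw [h7] at h5
            have h10 : (1 - E / ρ) ≤ (Real.exp (E / ρ))⁻¹ := by linarith
            calc (1 - E / ρ) * Real.exp (E / ρ) ≤ (Real.exp (E / ρ))⁻¹ * Real.exp (E / ρ) :=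
                  mul_le_mul_of_nonneg_right h10 (le_of_lt h6)
              _ = 1 := inv_mul_cancel₀ (ne_of_gt h6)
          nlinarith
        have hEρ0 : 0 ≤ E / ρ := by positivity
        calc β - 1 ≤ (E / ρ) * β := h8
          _ ≤ (3 * E / k ^ 2) * 3 := mul_le_mul ht1 hexp3 (by positivity) (by positivity)
          _ = 9 * E / k ^ 2 := by ring
      have hm1 : (1 : ℝ) ≤ (G.edgeSet.ncard : ℝ) := by nlinarith
      have hn2m : (Fintype.card V : ℝ) ≤ 2 * (G.edgeSet.ncard : ℝ) := by linarith
      have hfin : β * (Fintype.card V : ℝ) ≤ ((Fintype.card V : ℝ) - 1) +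
          7 * (G.edgeSet.ncard : ℝ) * E / k := by
        have e2 : (β - 1) * (Fintype.card V : ℝ) ≤
            9 * E / k ^ 2 * (Fintype.card V : ℝ) := by nlinarith
        have e3 : 9 * E / k ^ 2 * (Fintype.card V : ℝ) ≤
            6 * (G.edgeSet.ncard : ℝ) * E / k := by
          have hrw : 9 * E / k ^ 2 * (Fintype.card V : ℝ) =
              (9 * E * (Fintype.card V : ℝ)) / k ^ 2 := by ring
          rw [hrw, div_le_div_iff₀ hk2pos hk0]
          have hEk : 0 ≤ E * k := by positivity
          have hmE : 0 ≤ (G.edgeSet.ncard : ℝ) * E := by positivity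
          have h3k : 3 * k ≤ k ^ 2 := by nlinarith
          nlinarith [mul_le_mul_of_nonneg_right hn2m hEk,
            mul_le_mul_of_nonneg_right h3k hmE]
        have e4 : (1 : ℝ) ≤ (G.edgeSet.ncard : ℝ) * E / k := by
          rw [le_div_iff₀ hk0]
          nlinarith
        have e5 : 6 * (G.edgeSet.ncard : ℝ) * E / k + (G.edgeSet.ncard : ℝ) * E / k =
            7 * (G.edgeSet.ncard : ℝ) * E / k := by ring
        nlinarith [e2, e3, e4, e5]
      calc (H.edgeSet.ncard : ℝ) ≤ β * (Fintype.card V : ℝ) := hcore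
        _ ≤ _ := hfin
end
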